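/- arXiv:2311.01547 — 4 statements merged into one kernel-verified Lean document; each statement's English description precedes it below -/
import Mathlib

section
/- Let f : ℝ → ℂ be a continuous function in the Wiener space W(ℝ) whose Fourier transform satisfies 𝓕f = i·f pointwise (i.e. f ∈ E₃). Then Z₁ f(1/2, 1/2) = 0; equivalently, ∑_{k∈ℤ} (−1)^k f(k + 1/2) = 0. -/
open MeasureTheory Complex

noncomputable section

/-- The Zak transform `Z_λ f (x, γ) = √λ ∑_{k∈ℤ} f(λ(x+k)) e^{-2πikγ}`. -/
def Zak (lam : ℝ) (f : ℝ → ℂ) (x γ : ℝ) : ℂ :=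
  (Real.sqrt lam : ℂ) *
    ∑' k : ℤ, f (lam * (x + (k : ℝ))) *
      Complex.exp (-2 * (Real.pi : ℂ) * Complex.I * (k : ℂ) * (γ : ℂ))

/-- Membership in the Wiener space `W(ℝ)`: bounded, measurable, and
`∑_{k∈ℤ} sup_{x∈[k,k+1]} |f x| < ∞`. -/
def MemWiener (f : ℝ → ℂ) : Prop :=
  Measurable f ∧ (∃ C : ℝ, ∀ x : ℝ, ‖f x‖ ≤ C) ∧
    Summable (fun k : ℤ => sSup ((fun x : ℝ => ‖f x‖) '' Set.Icc (k : ℝ) ((k : ℝ) + 1)))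

/-- The Fourier transform `𝓕 f (γ) = ∫ f(x) e^{-2πiγx} dx`. -/
def fourierT (f : ℝ → ℂ) (γ : ℝ) : ℂ :=
  ∫ x : ℝ, f x * Complex.exp (-2 * (Real.pi : ℂ) * Complex.I * (γ : ℂ) * (x : ℂ))

/-- The Gabor system `G(g, α, β)` satisfies the frame inequalities with bounds A and B. -/
def GaborFrameWith (g : ℝ → ℂ) (α β A B : ℝ) : Prop :=
  ∀ f : ℝ → ℂ, MeasureTheory.MemLp f 2 MeasureTheory.volume →
    (A * ∫ x : ℝ, ‖f x‖ ^ 2) ≤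
        (∑' (k : ℤ) (m : ℤ),
          ‖∫ x : ℝ, f x *
              (starRingEnd ℂ)
                (Complex.exp (2 * (Real.pi : ℂ) * Complex.I * (β : ℂ) * (m : ℂ) * (x : ℂ)) *
                  g (x - α * (k : ℝ)))‖ ^ 2) ∧
      (∑' (k : ℤ) (m : ℤ),
          ‖∫ x : ℝ, f x *
              (starRingEnd ℂ)
                (Complex.exp (2 * (Real.pi : ℂ) * Complex.I * (β : ℂ) * (m : ℂ) * (x : ℂ)) *
                  g (x - α * (k : ℝ)))‖ ^ 2) ≤ B * ∫ x : ℝ, ‖f x‖ ^ 2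

/-- The Gabor system `G(g, α, β)` is a frame for `L²(ℝ)`. -/
def GaborFrame (g : ℝ → ℂ) (α β : ℝ) : Prop :=
  ∃ A B : ℝ, 0 < A ∧ 0 < B ∧ GaborFrameWith g α β A B

/-- The n-th Hermite function
`h_n(x) = (−1)^n c_n^{−1/2} e^{πx²} (d^n/dx^n)(e^{−2πx²})`, `c_n = (2π)^n 2^{n−1/2} n!`. -/
def hermiteFun (n : ℕ) (x : ℝ) : ℝ :=
  (-1 : ℝ) ^ n *
    (((2 * Real.pi) ^ n * (2 : ℝ) ^ ((n : ℝ) - 1 / 2) * (n.factorial : ℝ)) ^ (-(1 / 2) : ℝ)) *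
    Real.exp (Real.pi * x ^ 2) *
    iteratedDeriv n (fun t : ℝ => Real.exp (-2 * Real.pi * t ^ 2)) x

/-- The n-th Hermite function as a complex-valued function. -/
def hermiteC (n : ℕ) : ℝ → ℂ := fun x => (hermiteFun n x : ℂ)

open scoped FourierTransform

lemma summable_shift_sum (b : ℤ → ℝ) (hb : Summable b) (s : Finset ℕ) (c : ℤ) :
    Summable fun n : ℤ => ∑ j ∈ s, b (n + c + j) := by
  classical
  induction s using Finset.induction with
  | empty => simpa using summable_zero
  | @insert j s hnot ih =>
      simp_rw [Finset.sum_insert hnot]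
      refine Summable.add ?_ ih
      have := ((Equiv.addRight (c + (j : ℤ))).summable_iff).2 hb
      simpa [add_assoc, Function.comp_def] using this

lemma aux_summable_norm (g : C(ℝ, ℂ)) (b : ℤ → ℝ) (hb : Summable b) (hb0 : ∀ k, 0 ≤ b k)
    (h : ∀ (k : ℤ) (x : ℝ), x ∈ Set.Icc (k : ℝ) ((k : ℝ) + 1) → ‖g x‖ ≤ b k) :
    ∀ K : TopologicalSpace.Compacts ℝ,
      Summable fun n : ℤ => ‖(g.comp (ContinuousMap.addRight (n : ℝ))).restrict K‖ := by
  classical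
  intro K
  obtain ⟨r, hr⟩ := K.isCompact.isBounded.subset_closedBall 0
  obtain ⟨N, hN⟩ := exists_nat_ge r
  have hB : Summable (fun n : ℤ => ∑ j ∈ Finset.range (2 * N + 1), b (n + -(N : ℤ) + j)) :=
    summable_shift_sum b hb _ _
  apply Summable.of_nonneg_of_le (fun n => norm_nonneg _) _ hB
  intro n
  have hB0 : 0 ≤ ∑ j ∈ Finset.range (2 * N + 1), b (n + -(N : ℤ) + j) :=
    Finset.sum_nonneg fun j _ => hb0 _
  rw [ContinuousMap.norm_le _ hB0]
  intro x
  have hx' : |(x : ℝ)| ≤ r := by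
    have := hr x.2
    simpa [Real.dist_eq] using Metric.mem_closedBall.1 this
  have hxl : -(N : ℝ) ≤ (x : ℝ) := by have := (abs_le.1 hx').1; linarith
  have hxr : (x : ℝ) ≤ N := le_trans (abs_le.1 hx').2 hN
  set y : ℝ := (x : ℝ) + n with hy
  have hfloor_lb : n + -(N : ℤ) ≤ ⌊y⌋ := by
    apply Int.le_floor.2
    push_cast
    rw [hy]; linarith
  have hfloor_ub : ⌊y⌋ ≤ n + N := by
    have h1 : (⌊y⌋ : ℝ) ≤ ((n + (N : ℤ) : ℤ) : ℝ) := by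
      refine le_trans (Int.floor_le y) ?_
      push_cast
      rw [hy]; linarith
    exact_mod_cast h1
  have hval : ‖g y‖ ≤ b ⌊y⌋ := h ⌊y⌋ y ⟨Int.floor_le y, (Int.lt_floor_add_one y).le⟩
  have hmem : (⌊y⌋ - (n + -(N : ℤ))).toNat ∈ Finset.range (2 * N + 1) := by
    rw [Finset.mem_range]; omega
  have hsingle : b (n + -(N : ℤ) + ((⌊y⌋ - (n + -(N : ℤ))).toNat : ℤ)) ≤
      ∑ j ∈ Finset.range (2 * N + 1), b (n + -(N : ℤ) + j) :=
    Finset.single_le_sum (f := fun j : ℕ => b (n + -(N : ℤ) + j)) (fun j _ => hb0 _) hmem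
  have harg : n + -(N : ℤ) + ((⌊y⌋ - (n + -(N : ℤ))).toNat : ℤ) = ⌊y⌋ := by omega
  rw [harg] at hsingle
  refine le_trans ?_ hsingle
  have : ((g.comp (ContinuousMap.addRight (n : ℝ))).restrict K) x = g y := rfl
  rw [this]
  exact hval


set_option maxHeartbeats 1600000 in
theorem zak_aux_tsum (f : ℝ → ℂ) (hfc : Continuous f)
    (hfW : (Measurable f ∧ (∃ C : ℝ, ∀ x : ℝ, ‖f x‖ ≤ C) ∧
    Summable (fun k : ℤ => sSup ((fun x : ℝ => ‖f x‖) '' Set.Icc (k : ℝ) ((k : ℝ) + 1)))))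
    (hF : ∀ γ : ℝ, (∫ x : ℝ, f x * Complex.exp (-2 * (Real.pi : ℂ) * Complex.I * (γ : ℂ) * (x : ℂ))) = Complex.I * f γ) :
    ∑' k : ℤ, (-1 : ℂ) ^ k * f ((k : ℝ) + 1 / 2) = 0 := by
  obtain ⟨hmeas, ⟨C, hC⟩, hsumW⟩ := hfW
  set a : ℤ → ℝ := fun k => sSup ((fun x : ℝ => ‖f x‖) '' Set.Icc (k : ℝ) ((k : ℝ) + 1)) with hadef
  have haC : ∀ (k : ℤ) (y : ℝ), y ∈ Set.Icc (k : ℝ) ((k : ℝ) + 1) → ‖f y‖ ≤ a k := by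
    intro k y hy
    exact le_csSup ⟨C, by rintro - ⟨x, -, rfl⟩; exact hC x⟩ ⟨y, hy, rfl⟩
  have ha0 : ∀ k : ℤ, 0 ≤ a k := fun k =>
    le_trans (norm_nonneg (f k)) (haC k k ⟨le_refl _, by linarith⟩)
  have hashift : ∀ c : ℤ, Summable fun k : ℤ => a (k + c) :=
    fun c => ((Equiv.addRight c).summable_iff).2 hsumW
  -- the modulated translate g
  set g : C(ℝ, ℂ) := ⟨fun x => f (x + 1/2) * Complex.exp ((Real.pi * x : ℝ) * Complex.I), by
    exact ((hfc.comp (continuous_id.add continuous_const)).mul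
      (Complex.continuous_exp.comp ((Complex.continuous_ofReal.comp
        (continuous_const.mul continuous_id)).mul continuous_const)))⟩ with hgdef
  have hgnorm : ∀ x : ℝ, ‖g x‖ = ‖f (x + 1/2)‖ := by
    intro x
    rw [hgdef]
    simp only [ContinuousMap.coe_mk]
    rw [norm_mul, Complex.norm_exp_ofReal_mul_I, mul_one]
  -- bound for g on integer intervals
  set b : ℤ → ℝ := fun k => a k + a (k + 1) with hbdef
  have hbsum : Summable b := hsumW.add (hashift 1)
  have hb0 : ∀ k, 0 ≤ b k := fun k => add_nonneg (ha0 k) (ha0 (k + 1))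
  have hgb : ∀ (k : ℤ) (x : ℝ), x ∈ Set.Icc (k : ℝ) ((k : ℝ) + 1) → ‖g x‖ ≤ b k := by
    intro k x hx
    rw [hgnorm]
    rcases le_or_gt (x + 1/2) ((k : ℝ) + 1) with hle | hlt
    · exact le_trans (haC k (x + 1/2) ⟨by linarith [hx.1], hle⟩)
        (le_add_of_nonneg_right (ha0 (k + 1)))
    · refine le_trans (haC (k + 1) (x + 1/2) ⟨by push_cast; linarith, by push_cast; linarith [hx.2]⟩) ?_
      exact le_add_of_nonneg_left (ha0 k)
  -- Fourier transform of g
  have key : ∀ m : ℤ, 𝓕 (g : ℝ → ℂ) m = (-1 : ℂ) ^ m * f ((m : ℝ) - 1/2) := by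
    intro m
    rw [Real.fourier_real_eq_integral_exp_smul]
    have h1 : ∀ v : ℝ,
        Complex.exp (((-2 : ℝ) * Real.pi * v * ((m : ℤ) : ℝ) : ℝ) * Complex.I) • (g v)
        = (fun u : ℝ => ((-1 : ℂ) ^ m * (-Complex.I)) *
            (f u * Complex.exp (-2 * (Real.pi : ℂ) * Complex.I * (((m : ℝ) - 1/2 : ℝ) : ℂ) * (u : ℂ)))) (v + 1/2) := by
      intro v
      simp only [hgdef, ContinuousMap.coe_mk, smul_eq_mul]
      have e1 : ((-1 : ℂ) ^ m) = Complex.exp ((m : ℂ) * (Real.pi * Complex.I)) := by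
        rw [Complex.exp_int_mul, Complex.exp_pi_mul_I]
      have e2 : (-Complex.I) = Complex.exp (-(Real.pi/2 : ℂ) * Complex.I) := by
        rw [Complex.exp_mul_I]; simp
      rw [e1, e2, ← Complex.exp_add]
      rw [show ∀ (A B : ℂ) (z : ℂ), Complex.exp A * (z * Complex.exp B) = z * Complex.exp (A + B) by
        intro A B z; rw [Complex.exp_add]; ring]
      rw [show ∀ (A B : ℂ) (z : ℂ), Complex.exp A * (z * Complex.exp B) = z * Complex.exp (A + B) by
        intro A B z; rw [Complex.exp_add]; ring]
      congr 2
      push_cast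
      ring
    calc (∫ v : ℝ, Complex.exp (((-2 : ℝ) * Real.pi * v * ((m : ℤ) : ℝ) : ℝ) * Complex.I) • (g v))
        = ∫ v : ℝ, (fun u : ℝ => ((-1 : ℂ) ^ m * (-Complex.I)) *
            (f u * Complex.exp (-2 * (Real.pi : ℂ) * Complex.I * (((m : ℝ) - 1/2 : ℝ) : ℂ) * (u : ℂ)))) (v + 1/2) := by
          exact integral_congr_ae (Filter.Eventually.of_forall h1)
      _ = ∫ u : ℝ, ((-1 : ℂ) ^ m * (-Complex.I)) *
            (f u * Complex.exp (-2 * (Real.pi : ℂ) * Complex.I * (((m : ℝ) - 1/2 : ℝ) : ℂ) * (u : ℂ))) := by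
          exact integral_add_right_eq_self (μ := volume)
            (fun u : ℝ => ((-1 : ℂ) ^ m * (-Complex.I)) *
              (f u * Complex.exp (-2 * (Real.pi : ℂ) * Complex.I * (((m : ℝ) - 1/2 : ℝ) : ℂ) * (u : ℂ))))
            (1/2 : ℝ)
      _ = ((-1 : ℂ) ^ m * (-Complex.I)) *
            ∫ u : ℝ, f u * Complex.exp (-2 * (Real.pi : ℂ) * Complex.I * (((m : ℝ) - 1/2 : ℝ) : ℂ) * (u : ℂ)) := by
          exact integral_const_mul _ _
      _ = (-1 : ℂ) ^ m * f ((m : ℝ) - 1/2) := by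
          rw [hF ((m : ℝ) - 1/2)]
          have hI : (-Complex.I) * Complex.I = 1 := by
            simp [Complex.I_mul_I]
          calc (-1 : ℂ) ^ m * -Complex.I * (Complex.I * f ((m : ℝ) - 1/2))
              = (-1 : ℂ) ^ m * ((-Complex.I) * Complex.I) * f ((m : ℝ) - 1/2) := by ring
            _ = (-1 : ℂ) ^ m * f ((m : ℝ) - 1/2) := by rw [hI, mul_one]
  -- summability of 𝓕 g
  have hFsum : Summable fun n : ℤ => 𝓕 (g : ℝ → ℂ) n := by
    apply Summable.of_norm
    apply Summable.of_nonneg_of_le (fun n => norm_nonneg _) _ (hashift (-1))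
    intro n
    rw [key n, norm_mul]
    have : ‖(-1 : ℂ) ^ n‖ = 1 := by
      rw [norm_zpow]; norm_num
    rw [this, one_mul]
    apply haC (n + -1)
    constructor
    · push_cast; linarith
    · push_cast; linarith
  -- Poisson summation
  have hP := Real.tsum_eq_tsum_fourier
    (f := g) (aux_summable_norm g b hbsum hb0 hgb) hFsum 0
  -- evaluate both sides
  have hL : (∑' n : ℤ, g ((0 : ℝ) + n)) = ∑' k : ℤ, (-1 : ℂ) ^ k * f ((k : ℝ) + 1/2) := by
    apply tsum_congr
    intro n
    simp only [hgdef, ContinuousMap.coe_mk, zero_add]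
    have e3 : Complex.exp ((Real.pi * (n : ℝ) : ℝ) * Complex.I) = (-1 : ℂ) ^ n := by
      rw [show ((Real.pi * (n : ℝ) : ℝ) : ℂ) * Complex.I = (n : ℂ) * (Real.pi * Complex.I) by
        push_cast; ring]
      rw [Complex.exp_int_mul, Complex.exp_pi_mul_I]
    rw [e3]
    ring
  have hR : (∑' n : ℤ, 𝓕 (g : ℝ → ℂ) n * fourier n ((0 : ℝ) : UnitAddCircle))
      = -∑' k : ℤ, (-1 : ℂ) ^ k * f ((k : ℝ) + 1/2) := by
    have step1 : (∑' n : ℤ, 𝓕 (g : ℝ → ℂ) n * fourier n ((0 : ℝ) : UnitAddCircle))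
        = ∑' n : ℤ, (-1 : ℂ) ^ n * f ((n : ℝ) - 1/2) := by
      apply tsum_congr
      intro n
      rw [key n]
      rw [show ((0:ℝ) : UnitAddCircle) = (0 : UnitAddCircle) by norm_num]
      rw [fourier_eval_zero]
      ring
    rw [step1]
    rw [← (Equiv.addRight (1 : ℤ)).tsum_eq (fun n : ℤ => (-1 : ℂ) ^ n * f ((n : ℝ) - 1/2))]
    rw [← tsum_neg]
    apply tsum_congr
    intro k
    simp only [Equiv.coe_addRight]
    have e4 : (-1 : ℂ) ^ (k + 1) = -((-1 : ℂ) ^ k) := by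
      rw [zpow_add₀ (by norm_num : (-1 : ℂ) ≠ 0)]
      simp
    rw [e4]
    have e5 : (((k + 1 : ℤ)) : ℝ) - 1/2 = (k : ℝ) + 1/2 := by push_cast; ring
    rw [e5]
    ring
  rw [hL, hR] at hP
  have h2 : (2 : ℂ) * ∑' k : ℤ, (-1 : ℂ) ^ k * f ((k : ℝ) + 1/2) = 0 := by
    rw [two_mul]
    nth_rewrite 1 [hP]
    ring
  exact (mul_eq_zero.mp h2).resolve_left (by norm_num)



/-- if `𝓕f = i·f` pointwise then `Z₁f(1/2,1/2) = 0`, equivalently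
`∑_{k∈ℤ} (−1)^k f(k + 1/2) = 0`. -/
theorem zak_zero_mid_of_E3 (f : ℝ → ℂ) (hfc : Continuous f) (hfW : MemWiener f)
    (hF : ∀ γ : ℝ, fourierT f γ = Complex.I * f γ) :
    Zak 1 f (1 / 2) (1 / 2) = 0 ∧ ∑' k : ℤ, (-1 : ℂ) ^ k * f ((k : ℝ) + 1 / 2) = 0 := by
  have hS : ∑' k : ℤ, (-1 : ℂ) ^ k * f ((k : ℝ) + 1 / 2) = 0 :=
    zak_aux_tsum f hfc hfW (fun γ => hF γ)
  refine ⟨?_, hS⟩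
  have hterm : ∀ k : ℤ,
      f (1 * (1 / 2 + (k : ℝ))) *
        Complex.exp (-2 * (Real.pi : ℂ) * Complex.I * (k : ℂ) * ((1 / 2 : ℝ) : ℂ)) =
      (-1 : ℂ) ^ k * f ((k : ℝ) + 1 / 2) := by
    intro k
    have harg : (1 : ℝ) * (1 / 2 + (k : ℝ)) = (k : ℝ) + 1 / 2 := by ring
    rw [harg]
    have hexp : Complex.exp (-2 * (Real.pi : ℂ) * Complex.I * (k : ℂ) * ((1 / 2 : ℝ) : ℂ)) =
        (-1 : ℂ) ^ k := by
      rw [show (-2 * (Real.pi : ℂ) * Complex.I * (k : ℂ) * ((1 / 2 : ℝ) : ℂ)) =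
          (k : ℂ) * (-(Real.pi * Complex.I)) by push_cast; ring]
      rw [Complex.exp_int_mul, Complex.exp_neg, Complex.exp_pi_mul_I]
      norm_num
    rw [hexp]
    ring
  unfold Zak
  rw [Real.sqrt_one, Complex.ofReal_one, one_mul, tsum_congr hterm, hS]
end
end

section
/- Let f : ℝ → ℂ be a continuous odd function in the Wiener space W(ℝ) and let λ > 0. Then Z_λ f(x₀, γ₀) = 0 for every point (x₀, γ₀) ∈ (1/2)ℤ² \ (ℤ² + (1/2,1/2)); that is, Z_λ f vanishes at all points whose coordinates are half-integers, except possibly those of the form (k + 1/2, ℓ + 1/2) with k, ℓ ∈ ℤ. -/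
open MeasureTheory Complex

noncomputable section

/-- for an odd continuous Wiener function, the Zak transform vanishes at all
half-integer points `(a/2, b/2)` except possibly those in `ℤ² + (1/2, 1/2)`
(i.e. those with `a` and `b` both odd). -/
theorem zak_odd_zeros (f : ℝ → ℂ) (hfc : Continuous f) (hfW : MemWiener f)
    (hfo : ∀ x : ℝ, f (-x) = -f x) (lam : ℝ) (hlam : 0 < lam) :
    ∀ a b : ℤ, ¬ (Odd a ∧ Odd b) → Zak lam f ((a : ℝ) / 2) ((b : ℝ) / 2) = 0 := by
  intro a b hab
  have hab2 : Even (a * b) := by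
    rcases Int.even_or_odd a with ha | ha
    · exact ha.mul_right b
    · rcases Int.even_or_odd b with hb | hb
      · exact hb.mul_left a
      · exact absurd ⟨ha, hb⟩ hab
  obtain ⟨m, hm⟩ := hab2
  unfold Zak
  set g : ℤ → ℂ := fun k =>
    f (lam * ((a : ℝ) / 2 + (k : ℝ))) *
      Complex.exp (-2 * (Real.pi : ℂ) * Complex.I * (k : ℂ) * (((b : ℝ) / 2 : ℝ) : ℂ)) with hg
  have key : ∀ k : ℤ, g ((Equiv.subLeft (-a)) k) = -g k := by
    intro k
    simp only [hg, Equiv.subLeft_apply]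
    have harg : lam * ((a : ℝ) / 2 + ((-a - k : ℤ) : ℝ)) = -(lam * ((a : ℝ) / 2 + (k : ℝ))) := by
      push_cast; ring
    have hexp :
        Complex.exp (-2 * (Real.pi : ℂ) * Complex.I * ((-a - k : ℤ) : ℂ) * (((b : ℝ) / 2 : ℝ) : ℂ))
          = Complex.exp (-2 * (Real.pi : ℂ) * Complex.I * (k : ℂ) * (((b : ℝ) / 2 : ℝ) : ℂ)) := by
      have hE : (-2 * (Real.pi : ℂ) * Complex.I * ((-a - k : ℤ) : ℂ) * (((b : ℝ) / 2 : ℝ) : ℂ))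
          = (-2 * (Real.pi : ℂ) * Complex.I * (k : ℂ) * (((b : ℝ) / 2 : ℝ) : ℂ))
            + ((m + k * b : ℤ) : ℂ) * (2 * (Real.pi : ℂ) * Complex.I) := by
        have hmc : ((a : ℂ) * (b : ℂ)) = (m : ℂ) + (m : ℂ) := by
          exact_mod_cast congrArg (fun z : ℤ => (z : ℂ)) hm
        push_cast
        push_cast at hmc
        linear_combination (Real.pi : ℂ) * Complex.I * hmc
      rw [hE, Complex.exp_add, Complex.exp_int_mul_two_pi_mul_I, mul_one]
    rw [harg, hfo, hexp, neg_mul]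
  have hsum : ∑' k : ℤ, g k = -∑' k : ℤ, g k := by
    conv_lhs => rw [← (Equiv.subLeft (-a)).tsum_eq g]
    rw [tsum_congr key, tsum_neg]
  have hz : ∑' k : ℤ, g k = 0 := by
    have h2 : (2 : ℂ) * ∑' k : ℤ, g k = 0 := by linear_combination hsum
    simpa using h2
  rw [hz, mul_zero]
end
end

section
/- Let ℓ ∈ {0,1,2,3}, let g : ℝ → ℂ be a continuous function in the Wiener space W(ℝ) with 𝓕g = (−i)^ℓ g pointwise, let λ > 0, let N be a positive integer, and set s = √N. Then for every x ∈ ℝ and every p ∈ {0,1,…,N−1}: Z_{sλ} g((x+p)/N, x) = (−i)^ℓ · e^{2πi x (x+p)/N} · (1/s) · ∑_{r=0}^{N−1} e^{2πi r (x+p)/N} · Z_{s/λ} g((x+r)/N, −x). -/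
open MeasureTheory Complex

noncomputable section

open scoped ENNReal NNReal FourierTransform Real

/-- from a function in Wiener space, a summable bound for values along translated/scaled
integer grids with window `M`. -/
lemma wiener_bound {g : ℝ → ℂ} (hgW : MemWiener g) {a : ℝ} (ha : 0 < a) (b M : ℝ) :
    ∃ B : ℤ → ℝ, (∀ n, 0 ≤ B n) ∧ Summable B ∧
      ∀ (n : ℤ) (t : ℝ), |t| ≤ M → ‖g (a * ((n : ℝ) + t) + b)‖ ≤ B n := by
  obtain ⟨-, ⟨C, hC⟩, hS⟩ := hgW
  set S : ℤ → ℝ := fun k => sSup ((fun x : ℝ => ‖g x‖) '' Set.Icc (k : ℝ) ((k : ℝ) + 1)) with hSdef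
  have hbdd : ∀ k : ℤ, BddAbove ((fun x : ℝ => ‖g x‖) '' Set.Icc (k : ℝ) ((k : ℝ) + 1)) := by
    intro k
    exact ⟨C, by rintro - ⟨y, -, rfl⟩; exact hC y⟩
  have hle : ∀ (k : ℤ) (y : ℝ), y ∈ Set.Icc (k : ℝ) ((k : ℝ) + 1) → ‖g y‖ ≤ S k := by
    intro k y hy
    exact le_csSup (hbdd k) ⟨y, hy, rfl⟩
  have hS0 : ∀ k, 0 ≤ S k := by
    intro k
    exact le_trans (norm_nonneg (g k)) (hle k k (by simp))
  -- windows
  set w : ℤ → Finset ℤ := fun n => Finset.Icc ⌊a * n - a * M + b⌋ ⌊a * n + a * M + b⌋ with hwdef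
  refine ⟨fun n => ∑ j ∈ w n, S j, fun n => Finset.sum_nonneg fun j _ => hS0 j, ?_, ?_⟩
  · -- summability via ENNReal double counting
    set T : ℤ → NNReal := fun k => ⟨S k, hS0 k⟩ with hTdef
    have hTsum : Summable T := by
      rw [← NNReal.summable_coe]; exact hS
    set c : ℕ := ⌈(1 + 2 * (a * M)) / a⌉₊ with hcdef
    have hcount : ∀ j : ℤ, {n : ℤ | j ∈ w n} ⊆
        ↑(Finset.Icc ⌈((j : ℝ) - a * M - b) / a⌉ (⌈((j : ℝ) - a * M - b) / a⌉ + c)) := by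
      intro j n hn
      simp only [hwdef, Finset.mem_Icc, Set.mem_setOf_eq] at hn
      obtain ⟨h1, h2⟩ := hn
      have hjle : (j : ℝ) ≤ a * n + a * M + b := Int.le_floor.mp h2
      have hlt : a * n - a * M + b < (j : ℝ) + 1 := by
        have := Int.lt_floor_add_one (a * n - a * M + b)
        have h1' : (⌊a * n - a * M + b⌋ : ℝ) ≤ j := by exact_mod_cast h1
        linarith
      have hlo : (((j : ℝ) - a * M - b) / a) ≤ n := by
        rw [div_le_iff₀ ha]; nlinarith [mul_comm a (n:ℝ)]
      have hceil : ⌈((j : ℝ) - a * M - b) / a⌉ ≤ n := Int.ceil_le.mpr (by exact_mod_cast hlo)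
      have hup : (n : ℝ) < ((j : ℝ) - a * M - b) / a + (1 + 2 * (a * M)) / a := by
        rw [← add_div, lt_div_iff₀ ha]; nlinarith [mul_comm a (n:ℝ)]
      have hLc : (1 + 2 * (a * M)) / a ≤ (c : ℝ) := Nat.le_ceil _
      have hup2 : (n : ℝ) < (⌈((j : ℝ) - a * M - b) / a⌉ : ℝ) + c + 1 := by
        have := Int.le_ceil (((j : ℝ) - a * M - b) / a)
        linarith
      have : n < ⌈((j : ℝ) - a * M - b) / a⌉ + (c : ℤ) + 1 := by exact_mod_cast hup2
      simp only [Finset.coe_Icc, Set.mem_Icc]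
      omega
    have hTT : Summable (fun n : ℤ => ∑ j ∈ w n, T j) := by
      apply ENNReal.tsum_coe_ne_top_iff_summable.mp
      apply ne_top_of_le_ne_top (show ((c : ℝ≥0∞) + 1) * ∑' j : ℤ, (T j : ℝ≥0∞) ≠ ⊤ by
        apply ENNReal.mul_ne_top (by simp)
        exact ENNReal.tsum_coe_ne_top_iff_summable.mpr hTsum)
      calc (∑' n : ℤ, ((∑ j ∈ w n, T j : NNReal) : ℝ≥0∞))
          = ∑' n : ℤ, ∑ j ∈ w n, (T j : ℝ≥0∞) := by
            exact tsum_congr fun n => ENNReal.coe_finset_sum _ _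
        _ = ∑' n : ℤ, ∑' j : ℤ, Set.indicator (↑(w n)) (fun j => (T j : ℝ≥0∞)) j := by
            exact tsum_congr fun n => sum_eq_tsum_indicator _ _
        _ = ∑' j : ℤ, ∑' n : ℤ, Set.indicator (↑(w n)) (fun j => (T j : ℝ≥0∞)) j :=
            ENNReal.tsum_comm
        _ ≤ ∑' j : ℤ, (c + 1 : ℝ≥0∞) * (T j : ℝ≥0∞) := by
            refine ENNReal.tsum_le_tsum fun j => ?_
            have hb : ∀ n : ℤ, Set.indicator (↑(w n)) (fun j => (T j : ℝ≥0∞)) j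
                ≤ Set.indicator (↑(Finset.Icc ⌈((j : ℝ) - a * M - b) / a⌉
                    (⌈((j : ℝ) - a * M - b) / a⌉ + c)) : Set ℤ) (fun _ => (T j : ℝ≥0∞)) n := by
              intro n
              by_cases hn : j ∈ w n
              · rw [Set.indicator_of_mem (by simpa using hn),
                  Set.indicator_of_mem (hcount j hn)]
              · rw [Set.indicator_of_notMem (by simpa using hn)]
                exact zero_le
            calc ∑' n : ℤ, Set.indicator (↑(w n)) (fun j => (T j : ℝ≥0∞)) j
                ≤ ∑' n : ℤ, Set.indicator (↑(Finset.Icc ⌈((j : ℝ) - a * M - b) / a⌉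
                    (⌈((j : ℝ) - a * M - b) / a⌉ + c)) : Set ℤ) (fun _ => (T j : ℝ≥0∞)) n :=
                  ENNReal.tsum_le_tsum hb
              _ = ∑ n ∈ Finset.Icc ⌈((j : ℝ) - a * M - b) / a⌉
                    (⌈((j : ℝ) - a * M - b) / a⌉ + c), (T j : ℝ≥0∞) :=
                  (sum_eq_tsum_indicator _ _).symm
              _ ≤ (c + 1 : ℝ≥0∞) * (T j : ℝ≥0∞) := by
                  rw [Finset.sum_const, Int.card_Icc]
                  simp only [nsmul_eq_mul]
                  gcongr
                  norm_cast
                  omega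
        _ = ((c : ℝ≥0∞) + 1) * ∑' j : ℤ, (T j : ℝ≥0∞) := ENNReal.tsum_mul_left
    have := NNReal.summable_coe.mpr hTT
    convert this using 2 with n
    push_cast
    rfl
  · -- pointwise bound
    intro n t ht
    have hM : 0 ≤ M := le_trans (abs_nonneg t) ht
    set u : ℝ := a * ((n : ℝ) + t) + b with hu
    have hmem : u ∈ Set.Icc ((⌊u⌋ : ℝ)) ((⌊u⌋ : ℝ) + 1) :=
      ⟨Int.floor_le u, (Int.lt_floor_add_one u).le⟩
    have h1 : ‖g u‖ ≤ S ⌊u⌋ := hle _ _ hmem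
    have habs := abs_le.mp ht
    have hw : ⌊u⌋ ∈ w n := by
      simp only [hwdef, Finset.mem_Icc]
      constructor
      · apply Int.floor_le_floor
        rw [hu]; nlinarith
      · apply Int.floor_le_floor
        rw [hu]; nlinarith
    exact le_trans h1 (Finset.single_le_sum (fun j _ => hS0 j) hw)


open scoped FourierTransform Real

lemma fourier_eq (g : ℝ → ℂ) {μ : ℝ} (hμ : 0 < μ) (x γ ξ : ℝ) :
    𝓕 (fun t : ℝ => g (μ * (x + t)) * Complex.exp (-2 * (Real.pi : ℂ) * Complex.I * t * γ)) ξ =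
      (μ : ℂ)⁻¹ * Complex.exp (2 * (Real.pi : ℂ) * Complex.I * x * ((γ : ℂ) + ξ)) *
        fourierT g ((γ + ξ) / μ) := by
  have hμ' : μ ≠ 0 := ne_of_gt hμ
  rw [Real.fourier_real_eq_integral_exp_smul]
  calc (∫ v : ℝ, Complex.exp (↑(-2 * π * v * ξ) * Complex.I) •
        (g (μ * (x + v)) * Complex.exp (-2 * (Real.pi : ℂ) * Complex.I * v * γ)))
      = ∫ v : ℝ, (fun u : ℝ => g (u + μ * x) *
          Complex.exp (-2 * (Real.pi : ℂ) * Complex.I * ((u / μ : ℝ) : ℂ) * ((γ : ℂ) + ξ)))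
          (μ * v) := by
        refine integral_congr_ae (Filter.Eventually.of_forall fun v => ?_)
        simp only [smul_eq_mul]
        rw [show μ * (x + v) = μ * v + μ * x by ring, show ((μ * v) / μ : ℝ) = v by
          field_simp]
        rw [mul_comm (Complex.exp _), mul_assoc, ← Complex.exp_add]
        congr 1
        push_cast
        ring
    _ = |μ⁻¹| • ∫ u : ℝ, g (u + μ * x) *
          Complex.exp (-2 * (Real.pi : ℂ) * Complex.I * ((u / μ : ℝ) : ℂ) * ((γ : ℂ) + ξ)) :=
        MeasureTheory.Measure.integral_comp_mul_left
          (fun u : ℝ => g (u + μ * x) *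
            Complex.exp (-2 * (Real.pi : ℂ) * Complex.I * ((u / μ : ℝ) : ℂ) * ((γ : ℂ) + ξ))) μ
    _ = (μ : ℂ)⁻¹ * ∫ u : ℝ, (fun t : ℝ => g t *
          Complex.exp (-2 * (Real.pi : ℂ) * Complex.I * (((t - μ * x) / μ : ℝ) : ℂ) *
            ((γ : ℂ) + ξ))) (u + μ * x) := by
        rw [real_smul]
        norm_cast
        rw [abs_of_pos (by positivity)]
        congr 1
        refine integral_congr_ae (Filter.Eventually.of_forall fun u => ?_)
        simp only
        rw [show ((u + μ * x - μ * x) / μ : ℝ) = u / μ by ring_nf]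
    _ = (μ : ℂ)⁻¹ * ∫ t : ℝ, g t *
          Complex.exp (-2 * (Real.pi : ℂ) * Complex.I * (((t - μ * x) / μ : ℝ) : ℂ) *
            ((γ : ℂ) + ξ)) := by
        congr 1
        exact MeasureTheory.integral_add_right_eq_self (μ := MeasureTheory.volume)
          (fun t : ℝ => g t * Complex.exp (-2 * (Real.pi : ℂ) * Complex.I *
            (((t - μ * x) / μ : ℝ) : ℂ) * ((γ : ℂ) + ξ))) (μ * x)
    _ = (μ : ℂ)⁻¹ * ∫ t : ℝ, (g t *
          Complex.exp (-2 * (Real.pi : ℂ) * Complex.I * (((γ + ξ) / μ : ℝ) : ℂ) * (t : ℂ))) *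
          Complex.exp (2 * (Real.pi : ℂ) * Complex.I * x * ((γ : ℂ) + ξ)) := by
        congr 1
        refine integral_congr_ae (Filter.Eventually.of_forall fun t => ?_)
        dsimp only
        rw [mul_assoc (g t), ← Complex.exp_add]
        congr 1
        have hμc : (μ : ℂ) ≠ 0 := by exact_mod_cast hμ'
        push_cast
        field_simp
        ring
    _ = (μ : ℂ)⁻¹ * Complex.exp (2 * (Real.pi : ℂ) * Complex.I * x * ((γ : ℂ) + ξ)) *
        fourierT g ((γ + ξ) / μ) := by
        rw [MeasureTheory.integral_mul_const]
        rw [fourierT]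
        ring

lemma norm_exp_eq_one {z : ℂ} (r : ℝ) (h : z = (r : ℂ) * Complex.I) :
    ‖Complex.exp z‖ = 1 := by
  rw [h]
  simpa using Complex.abs_exp_ofReal_mul_I r

lemma sqrt_inv_eq {μ : ℝ} (hμ : 0 < μ) : Real.sqrt (1 / μ) = Real.sqrt μ * μ⁻¹ := by
  have h1 : Real.sqrt μ ≠ 0 := Real.sqrt_ne_zero'.mpr hμ
  have h2 : Real.sqrt μ * Real.sqrt μ = μ := Real.mul_self_sqrt hμ.le
  rw [one_div, Real.sqrt_inv]
  field_simp
  rw [Real.sq_sqrt hμ.le]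

lemma zak_key {ℓ : ℕ} {g : ℝ → ℂ} (hgc : Continuous g) (hgW : MemWiener g)
    (hF : ∀ γ : ℝ, fourierT g γ = (-Complex.I) ^ ℓ * g γ)
    {μ : ℝ} (hμ : 0 < μ) (x γ : ℝ) :
    Zak μ g x γ = (-Complex.I) ^ ℓ *
      Complex.exp (2 * (Real.pi : ℂ) * Complex.I * x * γ) * Zak (1/μ) g γ (-x) := by
  have hμ' : μ ≠ 0 := ne_of_gt hμ
  set f : C(ℝ, ℂ) := ⟨fun t => g (μ * (x + t)) *
      Complex.exp (-2 * (Real.pi : ℂ) * Complex.I * t * γ), by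
    apply Continuous.mul
    · exact hgc.comp (by continuity)
    · exact Complex.continuous_exp.comp (by continuity)⟩ with hfdef
  have h_norm : ∀ K : TopologicalSpace.Compacts ℝ,
      Summable fun n : ℤ => ‖(f.comp (ContinuousMap.addRight (n : ℝ))).restrict K‖ := by
    intro K
    obtain ⟨r, hr⟩ := K.isCompact.isBounded.subset_closedBall 0
    set M : ℝ := max r 0 with hM
    obtain ⟨B, hB0, hBsum, hB⟩ := wiener_bound hgW hμ (μ * x) M
    refine Summable.of_nonneg_of_le (fun n => norm_nonneg _) (fun n => ?_) hBsum
    rw [ContinuousMap.norm_le _ (hB0 n)]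
    rintro ⟨t, ht⟩
    have htM : |t| ≤ M := by
      have := hr ht
      simp only [Metric.mem_closedBall, Real.dist_eq, sub_zero] at this
      exact le_trans this (le_max_left r 0)
    simp only [ContinuousMap.restrict_apply, ContinuousMap.comp_apply,
      ContinuousMap.coe_addRight, ContinuousMap.coe_mk, hfdef]
    rw [norm_mul, norm_exp_eq_one (-(2 * Real.pi * (t + n) * γ)) (by push_cast; ring), mul_one]
    rw [show μ * (x + (t + (n : ℝ))) = μ * ((n : ℝ) + t) + μ * x by ring]
    exact hB n t htM
  have hFeq : ∀ n : ℤ, 𝓕 (⇑f) (n : ℝ) = (μ : ℂ)⁻¹ *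
      Complex.exp (2 * (Real.pi : ℂ) * Complex.I * x * ((γ : ℂ) + (n : ℝ))) *
      ((-Complex.I) ^ ℓ * g ((γ + (n : ℝ)) / μ)) := by
    intro n
    rw [show (⇑f) = fun t : ℝ => g (μ * (x + t)) *
      Complex.exp (-2 * (Real.pi : ℂ) * Complex.I * t * γ) from rfl]
    rw [fourier_eq g hμ x γ (n : ℝ), hF]
  have h_sum : Summable fun n : ℤ => 𝓕 (⇑f) (n : ℝ) := by
    obtain ⟨B, hB0, hBsum, hB⟩ := wiener_bound hgW (show (0:ℝ) < 1/μ by positivity) (γ/μ) 0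
    refine Summable.of_norm_bounded (hBsum.mul_left μ⁻¹) fun n => ?_
    rw [hFeq n]
    rw [norm_mul, norm_mul, norm_mul]
    rw [norm_exp_eq_one (2 * Real.pi * x * (γ + n)) (by push_cast; ring)]
    have h1 : ‖((μ : ℂ))⁻¹‖ = μ⁻¹ := by
      rw [norm_inv, Complex.norm_real, Real.norm_eq_abs, abs_of_pos hμ]
    have h2 : ‖(-Complex.I) ^ ℓ‖ = 1 := by
      rw [norm_pow, norm_neg, Complex.norm_I, one_pow]
    rw [h1, h2, mul_one, one_mul]
    have harg : (γ + (n : ℝ)) / μ = (1/μ) * ((n : ℝ) + 0) + γ/μ := by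
      field_simp
      ring
    rw [harg]
    exact mul_le_mul_of_nonneg_left (hB n 0 (by simp)) (by positivity)
  have poisson := Real.tsum_eq_tsum_fourier h_norm h_sum 0
  simp only [QuotientAddGroup.mk_zero, fourier_eval_zero, mul_one] at poisson
  have lhs_eq : Zak μ g x γ = (Real.sqrt μ : ℂ) * ∑' n : ℤ, f ((0 : ℝ) + (n : ℝ)) := by
    rw [Zak]
    congr 1
    refine tsum_congr fun k => ?_
    simp only [hfdef, ContinuousMap.coe_mk, zero_add]
    norm_num
  rw [lhs_eq, poisson]
  rw [Zak, show (1/μ : ℝ).sqrt = Real.sqrt μ * μ⁻¹ from sqrt_inv_eq hμ]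
  rw [← tsum_mul_left, ← tsum_mul_left, ← tsum_mul_left]
  refine tsum_congr fun k => ?_
  rw [hFeq k]
  rw [show ((γ + (k : ℝ)) / μ : ℝ) = (1/μ) * (γ + (k : ℝ)) by ring]
  push_cast
  rw [show Complex.exp (2 * (Real.pi : ℂ) * Complex.I * x * ((γ : ℂ) + (k : ℂ))) =
    Complex.exp (2 * (Real.pi : ℂ) * Complex.I * x * γ) *
    Complex.exp (-2 * (Real.pi : ℂ) * Complex.I * (k : ℂ) * (-(x : ℂ))) from by
      rw [← Complex.exp_add]; congr 1; ring]
  ring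

lemma zak_split {g : ℝ → ℂ} (hgW : MemWiener g) {lam : ℝ} (hlam : 0 < lam) {N : ℕ} (hN : 0 < N)
    (x : ℝ) (p : ℕ) (hp : p < N) :
    Zak (1 / (Real.sqrt (N : ℝ) * lam)) g x (-((x + (p : ℝ)) / (N : ℝ))) =
      (1 / (Real.sqrt (N : ℝ) : ℂ)) *
        ∑ r ∈ Finset.range N,
          Complex.exp (2 * (Real.pi : ℂ) * Complex.I * (r : ℂ) *
              (((x + (p : ℝ)) / (N : ℝ) : ℝ) : ℂ)) *
            Zak (Real.sqrt (N : ℝ) / lam) g ((x + (r : ℝ)) / (N : ℝ)) (-x) := by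
  haveI : NeZero N := ⟨hN.ne'⟩
  set s : ℝ := Real.sqrt (N : ℝ) with hsdef
  have hNpos : (0:ℝ) < (N : ℝ) := by exact_mod_cast hN
  have hs : 0 < s := Real.sqrt_pos.mpr hNpos
  have hs2 : s * s = (N : ℝ) := Real.mul_self_sqrt hNpos.le
  have hNR : (N : ℝ) ≠ 0 := ne_of_gt hNpos
  set u : ℝ := (x + (p : ℝ)) / (N : ℝ) with hudef
  have hNu : (N : ℝ) * u = x + p := by rw [hudef]; field_simp
  have hNuC : ((N : ℕ) : ℂ) * ((u : ℝ) : ℂ) = (x : ℂ) + (p : ℂ) := by exact_mod_cast hNu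
  set a : ℝ := 1 / (s * lam) with hadef
  have ha : 0 < a := by positivity
  set h : ℤ → ℂ := fun k => g (a * (x + (k : ℝ))) *
      Complex.exp (-2 * (Real.pi : ℂ) * Complex.I * (k : ℂ) * ((-u : ℝ) : ℂ)) with hhdef
  have hsum : Summable h := by
    obtain ⟨B, hB0, hBsum, hB⟩ := wiener_bound hgW ha (x * a) 0
    refine Summable.of_norm_bounded hBsum fun k => ?_
    simp only [hhdef]
    rw [norm_mul, norm_exp_eq_one (2 * Real.pi * k * u) (by push_cast; ring), mul_one]
    rw [show a * (x + (k : ℝ)) = a * ((k : ℝ) + 0) + x * a by ring]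
    exact hB k 0 (by simp)
  have hterm : ∀ (m : ℤ) (r : ℕ), r < N → h (m * N + r) =
      Complex.exp (2 * (Real.pi : ℂ) * Complex.I * (r : ℂ) * ((u : ℝ) : ℂ)) *
        (g ((s / lam) * ((x + (r : ℝ)) / (N : ℝ) + (m : ℝ))) *
          Complex.exp (-2 * (Real.pi : ℂ) * Complex.I * (m : ℂ) * ((-x : ℝ) : ℂ))) := by
    intro m r hr
    simp only [hhdef]
    have harg : a * (x + ((m * (N : ℤ) + (r : ℤ) : ℤ) : ℝ)) =
        (s / lam) * ((x + (r : ℝ)) / (N : ℝ) + (m : ℝ)) := by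
      push_cast
      rw [← hs2, hadef]
      field_simp
      ring
    rw [harg]
    have hexp : (-2 * (Real.pi : ℂ) * Complex.I * ((m * (N : ℤ) + (r : ℤ) : ℤ) : ℂ) *
        ((-u : ℝ) : ℂ)) =
        2 * (Real.pi : ℂ) * Complex.I * (r : ℂ) * ((u : ℝ) : ℂ) +
        (-2 * (Real.pi : ℂ) * Complex.I * (m : ℂ) * ((-x : ℝ) : ℂ)) +
        ((m * (p : ℤ) : ℤ) : ℂ) * (2 * (Real.pi : ℂ) * Complex.I) := by
      push_cast
      linear_combination (2 * (Real.pi : ℂ) * Complex.I * (m : ℂ)) * hNuC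
    rw [hexp, Complex.exp_add, Complex.exp_add, Complex.exp_int_mul_two_pi_mul_I, mul_one]
    ring
  have key : (∑' k : ℤ, h k) = ∑ r : Fin N,
      Complex.exp (2 * (Real.pi : ℂ) * Complex.I * ((r : ℕ) : ℂ) * ((u : ℝ) : ℂ)) *
        ∑' m : ℤ, g ((s / lam) * ((x + ((r : ℕ) : ℝ)) / (N : ℝ) + (m : ℝ))) *
          Complex.exp (-2 * (Real.pi : ℂ) * Complex.I * (m : ℂ) * ((-x : ℝ) : ℂ)) := by
    set e : ℤ × Fin N ≃ ℤ := (Int.divModEquiv N).symm with hedef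
    have hsum' : Summable (fun q : ℤ × Fin N => h (e q)) := hsum.comp_injective e.injective
    rw [← e.tsum_eq h, hsum'.tsum_prod]
    have E3 : ∀ m : ℤ, (∑' r : Fin N, h (e (m, r))) = ∑ r : Fin N, h (m * N + r) := by
      intro m
      rw [tsum_fintype]
      rfl
    rw [tsum_congr E3]
    have hinj : ∀ r : Fin N, Function.Injective (fun m : ℤ => m * (N : ℤ) + ((r : ℕ) : ℤ)) := by
      intro r a b hab
      simp only [add_left_inj] at hab
      exact mul_right_cancel₀ (by exact_mod_cast hN.ne') hab
    rw [Summable.tsum_finsetSum (f := fun (r : Fin N) (m : ℤ) => h (m * (N : ℤ) + ((r : ℕ) : ℤ)))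
      (fun r _ => hsum.comp_injective (hinj r))]
    refine Finset.sum_congr rfl fun r _ => ?_
    rw [← tsum_mul_left]
    refine tsum_congr fun m => ?_
    rw [hterm m r r.2]
  have coef : ((Real.sqrt a : ℝ) : ℂ) = (1 / (s : ℂ)) * ((Real.sqrt (s / lam) : ℝ) : ℂ) := by
    have h1 : a = (s / lam) / (N : ℝ) := by rw [hadef, ← hs2]; field_simp; try ring
    have h2 : Real.sqrt a = Real.sqrt (s / lam) / s := by
      rw [h1, Real.sqrt_div (by positivity) (N : ℝ), ← hsdef]
    rw [h2, Complex.ofReal_div]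
    ring
  show ((Real.sqrt a : ℝ) : ℂ) * (∑' k : ℤ, h k) = _
  rw [key, coef]
  rw [← Fin.sum_univ_eq_sum_range (fun r : ℕ =>
    Complex.exp (2 * (Real.pi : ℂ) * Complex.I * (r : ℂ) * ((u : ℝ) : ℂ)) *
      Zak (s / lam) g ((x + (r : ℝ)) / (N : ℝ)) (-x)) N]
  simp only [Zak]
  rw [Finset.mul_sum, Finset.mul_sum]
  refine Finset.sum_congr rfl fun r _ => ?_
  ring

/-- the Poisson-summation identity for the Zak transform of an eigenfunction
of the Fourier transform. -/
theorem zak_poisson (ℓ : ℕ) (hℓ : ℓ ≤ 3) (g : ℝ → ℂ) (hgc : Continuous g) (hgW : MemWiener g)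
    (hF : ∀ γ : ℝ, fourierT g γ = (-Complex.I) ^ ℓ * g γ)
    (lam : ℝ) (hlam : 0 < lam) (N : ℕ) (hN : 0 < N) (x : ℝ) (p : ℕ) (hp : p < N) :
    Zak (Real.sqrt (N : ℝ) * lam) g ((x + (p : ℝ)) / (N : ℝ)) x =
      (-Complex.I) ^ ℓ *
        Complex.exp (2 * (Real.pi : ℂ) * Complex.I * (x : ℂ) *
          (((x + (p : ℝ)) / (N : ℝ) : ℝ) : ℂ)) *
        (1 / (Real.sqrt (N : ℝ) : ℂ)) *
        ∑ r ∈ Finset.range N,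
          Complex.exp (2 * (Real.pi : ℂ) * Complex.I * (r : ℂ) *
              (((x + (p : ℝ)) / (N : ℝ) : ℝ) : ℂ)) *
            Zak (Real.sqrt (N : ℝ) / lam) g ((x + (r : ℝ)) / (N : ℝ)) (-x) := by
  have hNpos : (0:ℝ) < (N : ℝ) := by exact_mod_cast hN
  have hμ : (0:ℝ) < Real.sqrt (N : ℝ) * lam := by
    have := Real.sqrt_pos.mpr hNpos
    positivity
  rw [zak_key hgc hgW hF hμ ((x + (p : ℝ)) / (N : ℝ)) x]
  rw [zak_split hgW hlam hN x p hp]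
  rw [show Complex.exp (2 * (Real.pi : ℂ) * Complex.I * (((x + (p : ℝ)) / (N : ℝ) : ℝ) : ℂ) *
      (x : ℂ)) = Complex.exp (2 * (Real.pi : ℂ) * Complex.I * (x : ℂ) *
      (((x + (p : ℝ)) / (N : ℝ) : ℝ) : ℂ)) from by ring_nf]
  ring
end
end

section
/- Let g : ℝ → ℂ be a continuous function in the Wiener space W(ℝ) with 𝓕g = (−i)^ℓ g pointwise for ℓ ∈ {0, 2}, let N ∈ {2, 3}, set s = √N, and let λ > 0. Then for every p ∈ {0, 1, …, N−1}: Z_{sλ} g((1/2 + p)/N, 1/2) = (−1)^{⌊ℓ/2⌋} · Z_{s/λ} g((1/2 + p)/N, 1/2). Moreover, in the case N = 2 the same identity (with sign (−1)^{⌊ℓ/2⌋}) also holds for ℓ ∈ {1, 3}. -/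
open MeasureTheory Complex

noncomputable section

def wsup (g : ℝ → ℂ) (k : ℤ) : ℝ :=
  sSup ((fun x : ℝ => ‖g x‖) '' Set.Icc (k : ℝ) ((k : ℝ) + 1))

section Aux

variable {g : ℝ → ℂ} {C : ℝ}

lemma bddAbove_img (hC : ∀ x, ‖g x‖ ≤ C) (s : Set ℝ) :
    BddAbove ((fun x : ℝ => ‖g x‖) '' s) := by
  refine ⟨C, ?_⟩
  rintro _ ⟨y, -, rfl⟩
  exact hC y

lemma norm_le_wsup (hC : ∀ x, ‖g x‖ ≤ C) (t : ℝ) : ‖g t‖ ≤ wsup g ⌊t⌋ :=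
  le_csSup (bddAbove_img hC _) ⟨t, ⟨Int.floor_le t, (Int.lt_floor_add_one t).le⟩, rfl⟩

lemma wsup_nonneg (hC : ∀ x, ‖g x‖ ≤ C) (k : ℤ) : 0 ≤ wsup g k :=
  le_trans (norm_nonneg (g k)) <| le_csSup (bddAbove_img hC _)
    ⟨(k : ℝ), ⟨le_refl _, by linarith⟩, rfl⟩

lemma summable_wsup_floor (hC : ∀ x, ‖g x‖ ≤ C)
    (hs : Summable (wsup g)) {a : ℝ} (ha : 0 < a) (c : ℝ) (d : ℤ) :
    Summable fun k : ℤ => wsup g (⌊a * k + c⌋ + d) := by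
  set M : ℕ := ⌈a⁻¹⌉₊ + 1 with hM
  haveI : NeZero M := ⟨Nat.succ_ne_zero _⟩
  have hMa : 1 ≤ a * M := by
    have h1 : (a⁻¹ : ℝ) ≤ M := by
      calc (a⁻¹ : ℝ) ≤ ⌈a⁻¹⌉₊ := Nat.le_ceil _
      _ ≤ M := by exact_mod_cast Nat.le_succ _
    calc (1 : ℝ) = a * a⁻¹ := by field_simp
    _ ≤ a * M := by nlinarith
  rw [← (Int.divModEquiv M).symm.summable_iff]
  have hnn : ∀ p : ℤ × Fin M,
      0 ≤ wsup g (⌊a * ((Int.divModEquiv M).symm p) + c⌋ + d) := fun p => wsup_nonneg hC _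
  refine (summable_prod_of_nonneg hnn).mpr ⟨fun q => Summable.of_finite, ?_⟩
  have hterm : ∀ r : Fin M, Summable fun q : ℤ =>
      wsup g (⌊a * ((Int.divModEquiv M).symm (q, r)) + c⌋ + d) := by
    intro r
    have hinj : Function.Injective
        (fun q : ℤ => ⌊a * M * q + (a * (r : ℤ) + c)⌋ + d) := by
      have hmono : StrictMono (fun q : ℤ => ⌊a * M * q + (a * (r : ℤ) + c)⌋ + d) := by
        apply strictMono_int_of_lt_succ
        intro q
        have hc : ((q + 1 : ℤ) : ℝ) = (q : ℝ) + 1 := by push_cast; ring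
        simp only [hc]
        have harg : a * M * ((q : ℝ) + 1) + (a * (r : ℤ) + c)
            = (a * M * q + (a * (r : ℤ) + c)) + a * M := by ring
        rw [harg]
        have h2 : ⌊a * M * (q : ℝ) + (a * (r : ℤ) + c)⌋ + 1
            ≤ ⌊(a * M * (q : ℝ) + (a * (r : ℤ) + c)) + a * M⌋ := by
          calc ⌊a * M * (q : ℝ) + (a * (r : ℤ) + c)⌋ + 1
              = ⌊(a * M * (q : ℝ) + (a * (r : ℤ) + c)) + 1⌋ := by rw [Int.floor_add_one]
          _ ≤ _ := Int.floor_le_floor (by linarith)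
        linarith
      exact hmono.injective
    have := hs.comp_injective hinj
    refine this.congr fun q => ?_
    simp only [Function.comp_apply, Int.divModEquiv_symm_apply]
    congr 2
    push_cast
    ring
  refine Summable.congr (f := fun q : ℤ => ∑ r : Fin M,
      wsup g (⌊a * ((Int.divModEquiv M).symm (q, r)) + c⌋ + d)) ?_ ?_
  · exact summable_sum fun r _ => hterm r
  · intro q
    exact (tsum_fintype _).symm

lemma summable_norm_lattice (hC : ∀ x, ‖g x‖ ≤ C)
    (hs : Summable (wsup g)) {a : ℝ} (ha : 0 < a) (c : ℝ) :
    Summable fun k : ℤ => ‖g (a * k + c)‖ := by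
  refine Summable.of_nonneg_of_le (fun k => norm_nonneg _)
    (fun k => norm_le_wsup hC _) ?_
  simpa using summable_wsup_floor hC hs ha c 0

end Aux

section B
variable {g : ℝ → ℂ} {C : ℝ}

lemma norm_exp_I (t : ℝ) : ‖Complex.exp ((t : ℂ) * Complex.I)‖ = 1 := by
  rw [Complex.norm_exp_ofReal_mul_I]

lemma norm_exp_unit (t : ℝ) (k : ℤ) (γ : ℝ) :
    ‖Complex.exp (-2 * (Real.pi : ℂ) * Complex.I * (k : ℂ) * (γ : ℂ))‖ = 1 := by
  have : (-2 * (Real.pi : ℂ) * Complex.I * (k : ℂ) * (γ : ℂ))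
      = ((-2 * Real.pi * k * γ : ℝ) : ℂ) * Complex.I := by push_cast; ring
  rw [this]
  simpa using Complex.norm_exp_ofReal_mul_I (-2 * Real.pi * k * γ)

lemma summable_zak_term (hC : ∀ x, ‖g x‖ ≤ C) (hs : Summable (wsup g))
    {a : ℝ} (ha : 0 < a) (x γ : ℝ) :
    Summable fun k : ℤ =>
      g (a * (x + (k : ℝ))) * Complex.exp (-2 * (Real.pi : ℂ) * Complex.I * (k : ℂ) * (γ : ℂ)) := by
  apply Summable.of_norm
  have h1 := summable_norm_lattice hC hs ha (a * x)
  refine h1.congr fun k => ?_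
  rw [norm_mul, norm_exp_unit 0 k γ, mul_one]
  congr 2
  ring

lemma zak_periodic (b x γ : ℝ) (n : ℤ) : Zak b g x (γ + n) = Zak b g x γ := by
  unfold Zak
  congr 1
  apply tsum_congr
  intro k
  congr 1
  have h1 : (-2 * (Real.pi : ℂ) * Complex.I * (k : ℂ) * ((γ + n : ℝ) : ℂ))
      = -2 * (Real.pi : ℂ) * Complex.I * (k : ℂ) * (γ : ℂ) + (-k * n : ℤ) * (2 * Real.pi * Complex.I) := by
    push_cast; ring
  rw [h1, Complex.exp_add, Complex.exp_int_mul_two_pi_mul_I, mul_one]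

end B

section C
variable {g : ℝ → ℂ} {C : ℝ}

lemma zak_dilate (hC : ∀ x, ‖g x‖ ≤ C) (hs : Summable (wsup g)) {b : ℝ} (hb : 0 < b)
    {n : ℕ} (hn : 0 < n) (x γ : ℝ) :
    (Real.sqrt n : ℂ) * Zak ((n : ℝ) * b) g x γ
      = ∑ j ∈ Finset.range n, Zak b g ((n : ℝ) * x) ((γ + (j : ℝ)) / (n : ℝ)) := by
  have hn0 : (n : ℝ) ≠ 0 := Nat.cast_ne_zero.mpr hn.ne'
  have hn0' : (n : ℂ) ≠ 0 := Nat.cast_ne_zero.mpr hn.ne'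
  have hnz : ((n : ℤ) : ℂ) ≠ 0 := by exact_mod_cast hn0'
  have hpi : (Real.pi : ℂ) ≠ 0 := Complex.ofReal_ne_zero.mpr Real.pi_ne_zero
  set t : ℤ → ℕ → ℂ := fun m j => g (b * ((n : ℝ) * x + (m : ℝ))) *
      Complex.exp (-2 * (Real.pi : ℂ) * Complex.I * (m : ℂ) * ((((γ + (j : ℝ)) / (n : ℝ)) : ℝ) : ℂ))
    with ht
  set F : ℤ → ℂ := fun m => g (b * ((n : ℝ) * x + (m : ℝ))) *
      Complex.exp (-2 * (Real.pi : ℂ) * Complex.I * (m : ℂ) * (γ : ℂ) / (n : ℂ)) *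
      ∑ j ∈ Finset.range n, Complex.exp (-2 * (Real.pi : ℂ) * Complex.I * (m : ℂ) / (n : ℂ)) ^ j
    with hF
  have ht_sum : ∀ j ∈ Finset.range n, Summable fun m : ℤ => t m j := by
    intro j _
    exact summable_zak_term hC hs hb ((n : ℝ) * x) ((γ + (j : ℝ)) / (n : ℝ))
  -- each row sum equals F
  have hrow : ∀ m : ℤ, (∑ j ∈ Finset.range n, t m j) = F m := by
    intro m
    rw [hF]
    simp only
    rw [mul_assoc, Finset.mul_sum, Finset.mul_sum]
    apply Finset.sum_congr rfl
    intro j _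
    rw [ht]
    simp only
    rw [← Complex.exp_nat_mul, ← Complex.exp_add]
    congr 2
    push_cast
    ring
  -- geometric sum vanishes off multiples of n
  have hgeom : ∀ m : ℤ, ¬ ((n : ℤ) ∣ m) →
      (∑ j ∈ Finset.range n, Complex.exp (-2 * (Real.pi : ℂ) * Complex.I * (m : ℂ) / (n : ℂ)) ^ j) = 0 := by
    intro m hm
    have hr : Complex.exp (-2 * (Real.pi : ℂ) * Complex.I * (m : ℂ) / (n : ℂ)) ≠ 1 := by
      intro hr1
      rw [Complex.exp_eq_one_iff] at hr1
      obtain ⟨k, hk⟩ := hr1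
      apply hm
      refine ⟨-k, ?_⟩
      have h2 : (2 * (Real.pi : ℂ) * Complex.I) * (m : ℂ) = (2 * (Real.pi : ℂ) * Complex.I) * ((n : ℂ) * (-k : ℂ)) := by
        field_simp at hk
        linear_combination (-(2 * (Real.pi : ℂ) * Complex.I)) * hk
      have h3 := mul_left_cancel₀ (by
        refine mul_ne_zero (mul_ne_zero two_ne_zero hpi) Complex.I_ne_zero) h2
      exact_mod_cast h3
    have hrn : Complex.exp (-2 * (Real.pi : ℂ) * Complex.I * (m : ℂ) / (n : ℂ)) ^ n = 1 := by
      rw [← Complex.exp_nat_mul]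
      have harg : (n : ℂ) * (-2 * (Real.pi : ℂ) * Complex.I * (m : ℂ) / (n : ℂ))
          = ((-m : ℤ) : ℂ) * (2 * (Real.pi : ℂ) * Complex.I) := by
        push_cast
        field_simp
      rw [harg, Complex.exp_int_mul_two_pi_mul_I]
    rw [geom_sum_eq hr, hrn, sub_self, zero_div]
  -- reindex over multiples of n
  have hinj : Function.Injective (fun k : ℤ => (n : ℤ) * k) := fun a b hab => by
    have : (n : ℤ) * a = (n : ℤ) * b := hab
    exact mul_left_cancel₀ (by exact_mod_cast hn.ne') this
  have hsupp : Function.support F ⊆ Set.range (fun k : ℤ => (n : ℤ) * k) := by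
    intro m hm
    by_contra hmem
    apply hm
    have hdvd : ¬ ((n : ℤ) ∣ m) := by
      intro ⟨k, hk⟩
      exact hmem ⟨k, hk.symm⟩
    rw [hF]
    simp only
    rw [hgeom m hdvd, mul_zero]
  have hre : ∑' k : ℤ, F ((n : ℤ) * k) = ∑' m : ℤ, F m := hinj.tsum_eq hsupp
  -- value at multiples
  have hmul : ∀ k : ℤ, F ((n : ℤ) * k)
      = (g (((n : ℝ) * b) * (x + (k : ℝ))) *
          Complex.exp (-2 * (Real.pi : ℂ) * Complex.I * (k : ℂ) * (γ : ℂ))) * (n : ℂ) := by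
    intro k
    rw [hF]
    simp only
    have h1 : b * ((n : ℝ) * x + (((n : ℤ) * k : ℤ) : ℝ)) = ((n : ℝ) * b) * (x + (k : ℝ)) := by
      push_cast; ring
    have h2 : -2 * (Real.pi : ℂ) * Complex.I * (((n : ℤ) * k : ℤ) : ℂ) * (γ : ℂ) / (n : ℂ)
        = -2 * (Real.pi : ℂ) * Complex.I * (k : ℂ) * (γ : ℂ) := by
      push_cast
      field_simp
    have h3 : Complex.exp (-2 * (Real.pi : ℂ) * Complex.I * (((n : ℤ) * k : ℤ) : ℂ) / (n : ℂ)) = 1 := by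
      have harg : -2 * (Real.pi : ℂ) * Complex.I * (((n : ℤ) * k : ℤ) : ℂ) / (n : ℂ)
          = ((-k : ℤ) : ℂ) * (2 * (Real.pi : ℂ) * Complex.I) := by
        push_cast
        field_simp
      rw [harg, Complex.exp_int_mul_two_pi_mul_I]
    rw [h1, h2, h3]
    simp [mul_comm]
  -- put it together
  have hcoef : (Real.sqrt n : ℝ) * Real.sqrt ((n : ℝ) * b) = (n : ℝ) * Real.sqrt b := by
    rw [Real.sqrt_mul (by positivity : (0:ℝ) ≤ (n:ℝ)) b, ← mul_assoc,
      Real.mul_self_sqrt (by positivity : (0:ℝ) ≤ (n:ℝ))]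
  calc (Real.sqrt n : ℂ) * Zak ((n : ℝ) * b) g x γ
      = ((Real.sqrt n : ℝ) * Real.sqrt ((n : ℝ) * b) : ℝ) *
        ∑' k : ℤ, g (((n : ℝ) * b) * (x + (k : ℝ))) *
          Complex.exp (-2 * (Real.pi : ℂ) * Complex.I * (k : ℂ) * (γ : ℂ)) := by
        rw [Zak]; push_cast; ring
    _ = (Real.sqrt b : ℂ) * ((∑' k : ℤ, g (((n : ℝ) * b) * (x + (k : ℝ))) *
          Complex.exp (-2 * (Real.pi : ℂ) * Complex.I * (k : ℂ) * (γ : ℂ))) * (n : ℂ)) := by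
        rw [hcoef]; push_cast; ring
    _ = (Real.sqrt b : ℂ) * (∑' k : ℤ, (g (((n : ℝ) * b) * (x + (k : ℝ))) *
          Complex.exp (-2 * (Real.pi : ℂ) * Complex.I * (k : ℂ) * (γ : ℂ))) * (n : ℂ)) := by
        rw [tsum_mul_right]
    _ = (Real.sqrt b : ℂ) * ∑' k : ℤ, F ((n : ℤ) * k) := by
        congr 1
        exact (tsum_congr fun k => (hmul k).symm)
    _ = (Real.sqrt b : ℂ) * ∑' m : ℤ, F m := by rw [hre]
    _ = (Real.sqrt b : ℂ) * ∑' m : ℤ, ∑ j ∈ Finset.range n, t m j := by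
        congr 1
        exact (tsum_congr fun m => (hrow m).symm)
    _ = (Real.sqrt b : ℂ) * ∑ j ∈ Finset.range n, ∑' m : ℤ, t m j := by
        rw [Summable.tsum_finsetSum ht_sum]
    _ = ∑ j ∈ Finset.range n, Zak b g ((n : ℝ) * x) ((γ + (j : ℝ)) / (n : ℝ)) := by
        rw [Finset.mul_sum]
        rfl

end C

section D
open scoped FourierTransform
variable {g : ℝ → ℂ} {C : ℝ} {ℓ : ℕ}

lemma fourier_aux (hF : ∀ γ : ℝ, fourierT g γ = (-Complex.I) ^ ℓ * g γ)
    {α : ℝ} (hα : 0 < α) (γ ξ : ℝ) :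
    (𝓕 (fun u : ℝ => g (α * u) * Complex.exp (-2 * (Real.pi : ℂ) * Complex.I * (u : ℂ) * (γ : ℂ))) ξ)
      = ((α⁻¹ : ℝ) : ℂ) * ((-Complex.I) ^ ℓ * g ((γ + ξ) / α)) := by
  have hα0 : (α : ℝ) ≠ 0 := hα.ne'
  set Fc : ℝ → ℂ := fun w => g w *
      Complex.exp (-2 * (Real.pi : ℂ) * Complex.I * ((((γ + ξ) / α : ℝ)) : ℂ) * (w : ℂ)) with hFc
  rw [Real.fourier_real_eq_integral_exp_smul]
  have hpt : ∀ v : ℝ, Complex.exp (((-2 * Real.pi * v * ξ : ℝ) : ℂ) * Complex.I) •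
      (g (α * v) * Complex.exp (-2 * (Real.pi : ℂ) * Complex.I * (v : ℂ) * (γ : ℂ)))
      = Fc (α * v) := by
    intro v
    rw [hFc, smul_eq_mul]
    have : Complex.exp (((-2 * Real.pi * v * ξ : ℝ) : ℂ) * Complex.I) *
        (g (α * v) * Complex.exp (-2 * (Real.pi : ℂ) * Complex.I * (v : ℂ) * (γ : ℂ)))
        = g (α * v) * Complex.exp ((((-2 * Real.pi * v * ξ : ℝ) : ℂ) * Complex.I) +
            (-2 * (Real.pi : ℂ) * Complex.I * (v : ℂ) * (γ : ℂ))) := by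
      rw [Complex.exp_add]; ring
    rw [this]
    congr 2
    have hαC : (α : ℂ) ≠ 0 := Complex.ofReal_ne_zero.mpr hα0
    push_cast
    field_simp
    ring
  rw [integral_congr_ae (Filter.Eventually.of_forall hpt)]
  rw [MeasureTheory.Measure.integral_comp_mul_left Fc α]
  rw [abs_of_pos (inv_pos.mpr hα)]
  have : (∫ w : ℝ, Fc w) = fourierT g ((γ + ξ) / α) := rfl
  rw [Complex.real_smul, this, hF]

end D

section D2
open scoped FourierTransform
variable {g : ℝ → ℂ} {C : ℝ} {ℓ : ℕ}

lemma zak_symm (hgc : Continuous g) (hC : ∀ x, ‖g x‖ ≤ C) (hs : Summable (wsup g))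
    (hF : ∀ γ : ℝ, fourierT g γ = (-Complex.I) ^ ℓ * g γ)
    {α : ℝ} (hα : 0 < α) (x γ : ℝ) :
    Zak α g x γ = (-Complex.I) ^ ℓ * Complex.exp (2 * (Real.pi : ℂ) * Complex.I * (x : ℂ) * (γ : ℂ)) *
      Zak α⁻¹ g γ (-x) := by
  have hα0 : α ≠ 0 := hα.ne'
  set f : C(ℝ, ℂ) := ⟨fun u : ℝ => g (α * u) *
      Complex.exp (-2 * (Real.pi : ℂ) * Complex.I * (u : ℂ) * (γ : ℂ)), by
    apply (hgc.comp (continuous_const.mul continuous_id)).mul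
    apply Complex.continuous_exp.comp
    exact (continuous_const.mul Complex.continuous_ofReal).mul continuous_const⟩ with hf
  -- h_norm hypothesis
  have h_norm : ∀ K : TopologicalSpace.Compacts ℝ,
      Summable fun n : ℤ => ‖(f.comp <| ContinuousMap.addRight (n : ℝ)).restrict K‖ := by
    intro K
    obtain ⟨R, hR0, hRK⟩ := K.isCompact.isBounded.subset_closedBall_lt 0 0
    have hRK' : (K : Set ℝ) ⊆ Set.Icc (-R) R := by
      rwa [Real.closedBall_eq_Icc, zero_sub, zero_add] at hRK
    set J : ℕ := ⌈2 * α * R⌉₊ + 1 with hJ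
    set Sn : ℤ → ℝ := fun nn =>
      ∑ i ∈ Finset.range (J + 1), wsup g (⌊α * (nn : ℝ) + (-(α * R))⌋ + (i : ℤ)) with hSn
    have hSn_nonneg : ∀ nn, 0 ≤ Sn nn := fun nn =>
      Finset.sum_nonneg fun i _ => wsup_nonneg hC _
    refine Summable.of_nonneg_of_le (f := Sn) (fun nn => norm_nonneg _) ?_ ?_
    · -- pointwise bound
      intro nn
      refine (ContinuousMap.norm_le _ (hSn_nonneg nn)).mpr ?_
      rintro ⟨u, hu⟩
      have hu' : u ∈ Set.Icc (-R) R := hRK' hu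
      have happ : ((f.comp <| ContinuousMap.addRight (nn : ℝ)).restrict K) ⟨u, hu⟩
          = f (u + nn) := rfl
      rw [happ]
      have hval : ‖f (u + (nn : ℝ))‖ = ‖g (α * (u + nn))‖ := by
        rw [hf]
        simp only [ContinuousMap.coe_mk]
        rw [norm_mul]
        have : (-2 * (Real.pi : ℂ) * Complex.I * ((u + (nn : ℝ) : ℝ) : ℂ) * (γ : ℂ))
            = ((-2 * Real.pi * (u + (nn : ℝ)) * γ : ℝ) : ℂ) * Complex.I := by push_cast; ring
        rw [this, norm_exp_I, mul_one]
      rw [hval]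
      -- the floor of α(u+nn) sits in the window
      set m₀ : ℤ := ⌊α * (nn : ℝ) + (-(α * R))⌋ with hm₀
      have hlow : m₀ ≤ ⌊α * (u + (nn : ℝ))⌋ := by
        apply Int.floor_le_floor
        nlinarith [hu'.1]
      have hhigh : ⌊α * (u + (nn : ℝ))⌋ ≤ m₀ + (J : ℤ) := by
        have h2 : α * (u + (nn : ℝ)) ≤ (α * (nn : ℝ) + (-(α * R))) + (J : ℕ) := by
          have hJR : 2 * α * R ≤ (J : ℝ) := by
            rw [hJ]
            push_cast
            calc 2 * α * R ≤ (⌈2 * α * R⌉₊ : ℝ) := Nat.le_ceil _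
            _ ≤ _ := by linarith
          nlinarith [hu'.2]
        calc ⌊α * (u + (nn : ℝ))⌋ ≤ ⌊(α * (nn : ℝ) + (-(α * R))) + (J : ℕ)⌋ :=
              Int.floor_le_floor h2
        _ = m₀ + (J : ℤ) := by rw [Int.floor_add_natCast]
      set i₀ : ℕ := (⌊α * (u + (nn : ℝ))⌋ - m₀).toNat with hi₀
      have hi₀J : i₀ ∈ Finset.range (J + 1) := by
        rw [Finset.mem_range, hi₀]
        omega
      have hfl : m₀ + (i₀ : ℤ) = ⌊α * (u + (nn : ℝ))⌋ := by
        rw [hi₀]; omega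
      calc ‖g (α * (u + (nn : ℝ)))‖ ≤ wsup g ⌊α * (u + (nn : ℝ))⌋ := norm_le_wsup hC _
      _ = wsup g (m₀ + (i₀ : ℤ)) := by rw [hfl]
      _ ≤ Sn nn := Finset.single_le_sum (f := fun i : ℕ => wsup g (m₀ + (i : ℤ)))
            (fun i _ => wsup_nonneg hC _) hi₀J
    · -- summability of the bound
      rw [hSn]
      apply summable_sum
      intro i _
      exact summable_wsup_floor hC hs hα (-(α * R)) (i : ℤ)
  -- h_sum hypothesis
  have hαinv : 0 < α⁻¹ := inv_pos.mpr hα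
  have hgsum : Summable fun n : ℤ => g (α⁻¹ * ((γ : ℝ) + (n : ℝ))) := by
    apply Summable.of_norm
    refine (summable_norm_lattice hC hs hαinv (α⁻¹ * γ)).congr fun n => ?_
    congr 2
    ring
  have h_sum : Summable fun n : ℤ => 𝓕 ⇑f (n : ℝ) := by
    apply (hgsum.mul_left (((α⁻¹ : ℝ) : ℂ) * (-Complex.I) ^ ℓ)).congr
    intro n
    simp only [hf, ContinuousMap.coe_mk]
    rw [fourier_aux hF hα γ (n : ℝ)]
    have : (γ + (n : ℝ)) / α = α⁻¹ * (γ + (n : ℝ)) := by ring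
    rw [this]
    ring
  -- Poisson summation
  have hP := Real.tsum_eq_tsum_fourier h_norm h_sum x
  -- rewrite LHS of hP
  set T : ℂ := ∑' k : ℤ, g (α * (x + (k : ℝ))) *
      Complex.exp (-2 * (Real.pi : ℂ) * Complex.I * (k : ℂ) * (γ : ℂ)) with hT
  set T' : ℂ := ∑' k : ℤ, g (α⁻¹ * (γ + (k : ℝ))) *
      Complex.exp (-2 * (Real.pi : ℂ) * Complex.I * (k : ℂ) * ((-x : ℝ) : ℂ)) with hT'
  have hL : (∑' n : ℤ, f (x + (n : ℝ)))
      = Complex.exp (-2 * (Real.pi : ℂ) * Complex.I * (x : ℂ) * (γ : ℂ)) * T := by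
    rw [hT, ← tsum_mul_left]
    apply tsum_congr
    intro n
    rw [hf]
    simp only [ContinuousMap.coe_mk]
    have : (-2 * (Real.pi : ℂ) * Complex.I * ((x + (n : ℝ) : ℝ) : ℂ) * (γ : ℂ))
        = (-2 * (Real.pi : ℂ) * Complex.I * (x : ℂ) * (γ : ℂ)) +
          (-2 * (Real.pi : ℂ) * Complex.I * (n : ℂ) * (γ : ℂ)) := by push_cast; ring
    rw [this, Complex.exp_add]
    ring
  have hR : (∑' n : ℤ, 𝓕 ⇑f (n : ℝ) * fourier n (x : UnitAddCircle))
      = (((α⁻¹ : ℝ) : ℂ) * (-Complex.I) ^ ℓ) * T' := by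
    rw [hT', ← tsum_mul_left]
    apply tsum_congr
    intro n
    simp only [hf, ContinuousMap.coe_mk]
    rw [fourier_aux hF hα γ (n : ℝ), fourier_coe_apply]
    have h1 : (γ + (n : ℝ)) / α = α⁻¹ * (γ + (n : ℝ)) := by ring
    have h2 : (2 * (Real.pi : ℂ) * Complex.I * (n : ℂ) * (x : ℂ) / ((1 : ℝ) : ℂ))
        = -2 * (Real.pi : ℂ) * Complex.I * (n : ℂ) * ((-x : ℝ) : ℂ) := by push_cast; ring
    rw [h1, h2]
    ring
  rw [hL, hR] at hP
  -- final assembly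
  have hexp : Complex.exp (2 * (Real.pi : ℂ) * Complex.I * (x : ℂ) * (γ : ℂ)) *
      Complex.exp (-2 * (Real.pi : ℂ) * Complex.I * (x : ℂ) * (γ : ℂ)) = 1 := by
    rw [← Complex.exp_add,
      show (2 * (Real.pi : ℂ) * Complex.I * (x : ℂ) * (γ : ℂ)) +
        (-2 * (Real.pi : ℂ) * Complex.I * (x : ℂ) * (γ : ℂ)) = 0 from by ring,
      Complex.exp_zero]
  have hTeq : T = Complex.exp (2 * (Real.pi : ℂ) * Complex.I * (x : ℂ) * (γ : ℂ)) *
      (((α⁻¹ : ℝ) : ℂ) * (-Complex.I) ^ ℓ) * T' := by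
    calc T = (Complex.exp (2 * (Real.pi : ℂ) * Complex.I * (x : ℂ) * (γ : ℂ)) *
          Complex.exp (-2 * (Real.pi : ℂ) * Complex.I * (x : ℂ) * (γ : ℂ))) * T := by
          rw [hexp, one_mul]
    _ = Complex.exp (2 * (Real.pi : ℂ) * Complex.I * (x : ℂ) * (γ : ℂ)) *
          (Complex.exp (-2 * (Real.pi : ℂ) * Complex.I * (x : ℂ) * (γ : ℂ)) * T) := by ring
    _ = _ := by rw [hP]; ring
  have h0 : Real.sqrt α ≠ 0 := ne_of_gt (Real.sqrt_pos.mpr hα)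
  have hsq : Real.sqrt α * α⁻¹ = Real.sqrt α⁻¹ := by
    rw [Real.sqrt_inv]
    field_simp
    exact Real.sq_sqrt hα.le
  have hsqC : ((Real.sqrt α⁻¹ : ℝ) : ℂ) = ((Real.sqrt α : ℝ) : ℂ) * ((α⁻¹ : ℝ) : ℂ) := by
    rw [← Complex.ofReal_mul, hsq]
  rw [Zak, Zak, ← hT, ← hT', hTeq, hsqC]
  ring

end D2

section E
variable {g : ℝ → ℂ} {C : ℝ} {ℓ : ℕ}

lemma zak_key_s12 (hgc : Continuous g) (hC : ∀ x, ‖g x‖ ≤ C) (hs : Summable (wsup g))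
    (hF : ∀ γ : ℝ, fourierT g γ = (-Complex.I) ^ ℓ * g γ)
    {n : ℕ} (hn : 0 < n) {a b : ℝ} (ha : 0 < a) (hb : 0 < b)
    (hab : a * b = n) (p : ℕ) :
    (Real.sqrt n : ℂ) * Zak a g ((1 / 2 + (p : ℝ)) / n) (1 / 2)
      = (-Complex.I) ^ ℓ * ∑ j ∈ Finset.range n,
          Complex.exp (((2 * Real.pi * (1 / 2 + (p : ℝ)) * (1 / 2 + (j : ℝ)) / n : ℝ) : ℂ) *
            Complex.I) * Zak b g ((1 / 2 + (j : ℝ)) / n) (1 / 2) := by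
  have hn0 : (n : ℝ) ≠ 0 := Nat.cast_ne_zero.mpr hn.ne'
  set μ : ℝ := a / n with hμ
  have hμpos : 0 < μ := div_pos ha (by exact_mod_cast hn)
  have hbμ : b = μ⁻¹ := by
    rw [hμ, inv_div, eq_div_iff ha.ne']
    linarith [hab]
  have ha_eq : a = (n : ℝ) * μ := by rw [hμ]; field_simp
  rw [ha_eq, zak_dilate hC hs hμpos hn ((1 / 2 + (p : ℝ)) / n) (1 / 2)]
  have hx : (n : ℝ) * ((1 / 2 + (p : ℝ)) / n) = 1 / 2 + (p : ℝ) := by field_simp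
  rw [hx, Finset.mul_sum]
  apply Finset.sum_congr rfl
  intro j hj
  rw [zak_symm hgc hC hs hF hμpos (1 / 2 + (p : ℝ)) ((1 / 2 + (j : ℝ)) / n)]
  have hper : Zak μ⁻¹ g ((1 / 2 + (j : ℝ)) / n) (-(1 / 2 + (p : ℝ)))
      = Zak μ⁻¹ g ((1 / 2 + (j : ℝ)) / n) (1 / 2) := by
    have hsh : (-(1 / 2 + (p : ℝ))) = 1 / 2 + ((-(1 + (p : ℤ)) : ℤ) : ℝ) := by push_cast; ring
    rw [hsh, zak_periodic]
  rw [hper, ← hbμ]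
  rw [show (2 * (Real.pi : ℂ) * Complex.I * ((1 / 2 + (p : ℝ) : ℝ) : ℂ) *
      (((1 / 2 + (j : ℝ)) / n : ℝ) : ℂ))
      = ((2 * Real.pi * (1 / 2 + (p : ℝ)) * (1 / 2 + (j : ℝ)) / n : ℝ) : ℂ) * Complex.I
      from by push_cast; ring]
  ring

lemma exp_val (θ cv sv a : ℝ) (k : ℤ) (hθ : θ = a + 2 * Real.pi * k)
    (hc : Real.cos a = cv) (hsin : Real.sin a = sv) :
    Complex.exp ((θ : ℂ) * Complex.I) = (cv : ℂ) + (sv : ℂ) * Complex.I := by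
  have h1 : (θ : ℂ) * Complex.I = (a : ℂ) * Complex.I + (k : ℂ) * (2 * (Real.pi : ℂ) * Complex.I) := by
    rw [hθ]; push_cast; ring
  rw [h1, Complex.exp_add, Complex.exp_int_mul_two_pi_mul_I, mul_one, Complex.exp_mul_I,
    ← Complex.ofReal_cos, ← Complex.ofReal_sin, hc, hsin]

lemma cancel_ne {c z : ℂ} (hc : c ≠ 0) (h : c * z = 0) : z = 0 := by
  rcases mul_eq_zero.mp h with h' | h'
  · exact absurd h' hc
  · exact h'

end E

section Alg

lemma complex_one_add_I_ne : (1 + Complex.I) ≠ 0 := by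
  intro h
  have := congrArg Complex.re h
  simp at this

lemma complex_one_sub_I_ne : (1 - Complex.I) ≠ 0 := by
  intro h
  have := congrArg Complex.re h
  simp at this

lemma complex_ofReal_sub_I_ne (t : ℝ) : ((t : ℂ) - Complex.I) ≠ 0 := by
  intro h
  have := congrArg Complex.im h
  simp at this

lemma alg2 (rr : ℝ) (hrr : rr ≠ 0) (m c F0 F1 G0 G1 : ℂ)
    (hmc : (m = 1 ∧ c = 1) ∨ (m = -1 ∧ c = -1) ∨
      (m = -Complex.I ∧ c = 1) ∨ (m = Complex.I ∧ c = -1))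
    (h10 : (rr : ℂ) * F0 = m * (((rr : ℂ) / 2 * (1 + Complex.I)) * G0 +
      ((rr : ℂ) / 2 * (-1 + Complex.I)) * G1))
    (h11 : (rr : ℂ) * F1 = m * (((rr : ℂ) / 2 * (-1 + Complex.I)) * G0 +
      ((rr : ℂ) / 2 * (1 + Complex.I)) * G1))
    (h20 : (rr : ℂ) * G0 = m * (((rr : ℂ) / 2 * (1 + Complex.I)) * F0 +
      ((rr : ℂ) / 2 * (-1 + Complex.I)) * F1))
    (h21 : (rr : ℂ) * G1 = m * (((rr : ℂ) / 2 * (-1 + Complex.I)) * F0 +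
      ((rr : ℂ) / 2 * (1 + Complex.I)) * F1)) :
    F0 = c * G0 ∧ F1 = c * G1 := by
  have hr0 : (rr : ℂ) ≠ 0 := Complex.ofReal_ne_zero.mpr hrr
  have h2r : (2 * (rr : ℂ)) ≠ 0 := mul_ne_zero two_ne_zero hr0
  rcases hmc with ⟨hm, hc⟩ | ⟨hm, hc⟩ | ⟨hm, hc⟩ | ⟨hm, hc⟩ <;> subst hm <;> subst hc
  · have hS : (F0 + F1) - (G0 + G1) = 0 := by
      refine cancel_ne (mul_ne_zero hr0 complex_one_add_I_ne) ?_
      linear_combination h10 + h11 - h20 - h21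
    have hD : (F0 - F1) - (G0 - G1) = 0 := by
      refine cancel_ne h2r ?_
      linear_combination h10 - h11 - h20 + h21
    constructor
    · linear_combination (hS + hD) / 2
    · linear_combination (hS - hD) / 2
  · have hS : (F0 + F1) + (G0 + G1) = 0 := by
      refine cancel_ne (mul_ne_zero hr0 complex_one_add_I_ne) ?_
      linear_combination h10 + h11 + h20 + h21
    have hD : (F0 - F1) + (G0 - G1) = 0 := by
      refine cancel_ne h2r ?_
      linear_combination h10 - h11 + h20 - h21
    constructor
    · linear_combination (hS + hD) / 2
    · linear_combination (hS - hD) / 2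
  · have hS : (F0 + F1) - (G0 + G1) = 0 := by
      refine cancel_ne h2r ?_
      linear_combination h10 + h11 - h20 - h21 +
        ((rr : ℂ) * (F0 + F1 - G0 - G1)) * Complex.I_mul_I
    have hD : (F0 - F1) - (G0 - G1) = 0 := by
      refine cancel_ne (mul_ne_zero hr0 complex_one_sub_I_ne) ?_
      linear_combination h10 - h11 - h20 + h21
    constructor
    · linear_combination (hS + hD) / 2
    · linear_combination (hS - hD) / 2
  · have hS : (F0 + F1) + (G0 + G1) = 0 := by
      refine cancel_ne h2r ?_
      linear_combination h10 + h11 + h20 + h21 +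
        ((rr : ℂ) * (F0 + F1 + G0 + G1)) * Complex.I_mul_I
    have hD : (F0 - F1) + (G0 - G1) = 0 := by
      refine cancel_ne (mul_ne_zero hr0 complex_one_sub_I_ne) ?_
      linear_combination h10 - h11 + h20 - h21
    constructor
    · linear_combination (hS + hD) / 2
    · linear_combination (hS - hD) / 2

lemma alg3 (rr : ℝ) (hrr : rr ≠ 0) (hrr2 : ((rr : ℂ)) ^ 2 = 3) (m c F0 F1 F2 G0 G1 G2 : ℂ)
    (hmc : (m = 1 ∧ c = 1) ∨ (m = -1 ∧ c = -1))
    (h10 : (rr : ℂ) * F0 = m * ((((rr : ℂ) + Complex.I) / 2) * G0 + Complex.I * G1 +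
      (((-rr : ℂ) + Complex.I) / 2) * G2))
    (h11 : (rr : ℂ) * F1 = m * (Complex.I * G0 + (-Complex.I) * G1 + Complex.I * G2))
    (h12 : (rr : ℂ) * F2 = m * ((((-rr : ℂ) + Complex.I) / 2) * G0 + Complex.I * G1 +
      (((rr : ℂ) + Complex.I) / 2) * G2))
    (h20 : (rr : ℂ) * G0 = m * ((((rr : ℂ) + Complex.I) / 2) * F0 + Complex.I * F1 +
      (((-rr : ℂ) + Complex.I) / 2) * F2))
    (h21 : (rr : ℂ) * G1 = m * (Complex.I * F0 + (-Complex.I) * F1 + Complex.I * F2))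
    (h22 : (rr : ℂ) * G2 = m * ((((-rr : ℂ) + Complex.I) / 2) * F0 + Complex.I * F1 +
      (((rr : ℂ) + Complex.I) / 2) * F2)) :
    F0 = c * G0 ∧ F1 = c * G1 ∧ F2 = c * G2 := by
  have hr0 : (rr : ℂ) ≠ 0 := Complex.ofReal_ne_zero.mpr hrr
  have h2r : (2 * (rr : ℂ)) ≠ 0 := mul_ne_zero two_ne_zero hr0
  rcases hmc with ⟨hm, hc⟩ | ⟨hm, hc⟩ <;> subst hm <;> subst hc
  case _ => -- m = 1
    have h02 : (F0 - G0) - (F2 - G2) = 0 := by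
      refine cancel_ne h2r ?_
      linear_combination h10 - h12 - h20 + h22
    have hB : ((rr : ℂ) + Complex.I) * (F0 - G0) + Complex.I * (F1 - G1) = 0 := by
      linear_combination h10 - h20 + (((-rr : ℂ) + Complex.I) / 2) * h02
    have hC : ((rr : ℂ) - Complex.I) * (F1 - G1) + 2 * Complex.I * (F0 - G0) = 0 := by
      linear_combination h11 - h21 + Complex.I * h02
    have hu0 : F0 - G0 = 0 := by
      refine cancel_ne (by norm_num : (6 : ℂ) ≠ 0) ?_
      linear_combination ((rr : ℂ) - Complex.I) * hB - Complex.I * hC -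
        (F0 - G0) * hrr2 + (3 * (F0 - G0)) * Complex.I_mul_I
    have hu1 : F1 - G1 = 0 := by
      refine cancel_ne (complex_ofReal_sub_I_ne rr) ?_
      linear_combination hC - 2 * Complex.I * hu0
    refine ⟨by linear_combination hu0, by linear_combination hu1, by linear_combination hu0 - h02⟩
  case _ => -- m = -1
    have h02 : (F0 + G0) - (F2 + G2) = 0 := by
      refine cancel_ne h2r ?_
      linear_combination h10 - h12 + h20 - h22
    have hB : ((rr : ℂ) + Complex.I) * (F0 + G0) + Complex.I * (F1 + G1) = 0 := by
      linear_combination h10 + h20 + (((-rr : ℂ) + Complex.I) / 2) * h02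
    have hC : ((rr : ℂ) - Complex.I) * (F1 + G1) + 2 * Complex.I * (F0 + G0) = 0 := by
      linear_combination h11 + h21 + Complex.I * h02
    have hu0 : F0 + G0 = 0 := by
      refine cancel_ne (by norm_num : (6 : ℂ) ≠ 0) ?_
      linear_combination ((rr : ℂ) - Complex.I) * hB - Complex.I * hC -
        (F0 + G0) * hrr2 + (3 * (F0 + G0)) * Complex.I_mul_I
    have hu1 : F1 + G1 = 0 := by
      refine cancel_ne (complex_ofReal_sub_I_ne rr) ?_
      linear_combination hC - 2 * Complex.I * hu0
    refine ⟨by linear_combination hu0, by linear_combination hu1, by linear_combination hu0 - h02⟩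

end Alg

/-- modular symmetry of the Zak transform at `γ = 1/2` for Fourier
eigenfunctions with eigenvalue `(−i)^ℓ`, `ℓ ∈ {0,2}`, for `N = s² ∈ {2,3}`;
moreover for `N = 2` the identity also holds for `ℓ ∈ {1,3}`. -/
theorem zak_modular_symmetry_even (ℓ N : ℕ) (hN : N = 2 ∨ N = 3)
    (hℓ : ℓ = 0 ∨ ℓ = 2 ∨ (N = 2 ∧ (ℓ = 1 ∨ ℓ = 3)))
    (g : ℝ → ℂ) (hgc : Continuous g) (hgW : MemWiener g)
    (hF : ∀ γ : ℝ, fourierT g γ = (-Complex.I) ^ ℓ * g γ)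
    (lam : ℝ) (hlam : 0 < lam) :
    ∀ p : ℕ, p < N →
      Zak (Real.sqrt (N : ℝ) * lam) g ((1 / 2 + (p : ℝ)) / (N : ℝ)) (1 / 2) =
        (-1 : ℂ) ^ (ℓ / 2) *
          Zak (Real.sqrt (N : ℝ) / lam) g ((1 / 2 + (p : ℝ)) / (N : ℝ)) (1 / 2) := by
  intro p hp
  obtain ⟨hgm, ⟨C, hC⟩, hsW⟩ := hgW
  have hs : Summable (wsup g) := hsW
  rcases hN with rfl | rfl
  · -- N = 2
    have hsq2 : (0 : ℝ) < Real.sqrt ((2:ℕ) : ℝ) := Real.sqrt_pos.mpr (by norm_num)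
    have ha : 0 < Real.sqrt ((2:ℕ) : ℝ) * lam := by positivity
    have hb : 0 < Real.sqrt ((2:ℕ) : ℝ) / lam := by positivity
    have hab : (Real.sqrt ((2:ℕ) : ℝ) * lam) * (Real.sqrt ((2:ℕ) : ℝ) / lam) = ((2:ℕ) : ℝ) := by
      field_simp
      linear_combination Real.mul_self_sqrt (show (0:ℝ) ≤ ((2:ℕ) : ℝ) by positivity)
    have hab' : (Real.sqrt ((2:ℕ) : ℝ) / lam) * (Real.sqrt ((2:ℕ) : ℝ) * lam) = ((2:ℕ) : ℝ) := by
      linarith [hab]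
    have k1 := fun q => zak_key_s12 hgc hC hs hF (n := 2) (by norm_num) ha hb hab q
    have k2 := fun q => zak_key_s12 hgc hC hs hF (n := 2) (by norm_num) hb ha hab' q
    have h10 := k1 0
    have h11 := k1 1
    have h20 := k2 0
    have h21 := k2 1
    simp only [Finset.sum_range_succ, Finset.sum_range_zero, zero_add] at h10 h11 h20 h21
    have hc34 : Real.cos (3 * Real.pi / 4) = -(Real.sqrt 2 / 2) := by
      rw [show (3 * Real.pi / 4) = Real.pi - Real.pi / 4 by ring, Real.cos_pi_sub,
        Real.cos_pi_div_four]
    have hs34 : Real.sin (3 * Real.pi / 4) = Real.sqrt 2 / 2 := by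
      rw [show (3 * Real.pi / 4) = Real.pi - Real.pi / 4 by ring, Real.sin_pi_sub,
        Real.sin_pi_div_four]
    have e00 := exp_val (2 * Real.pi * (1 / 2 + ((0:ℕ) : ℝ)) * (1 / 2 + ((0:ℕ) : ℝ)) / ((2:ℕ) : ℝ))
      _ _ (Real.pi / 4) 0 (by push_cast; ring) Real.cos_pi_div_four Real.sin_pi_div_four
    have e01 := exp_val (2 * Real.pi * (1 / 2 + ((0:ℕ) : ℝ)) * (1 / 2 + ((1:ℕ) : ℝ)) / ((2:ℕ) : ℝ))
      _ _ (3 * Real.pi / 4) 0 (by push_cast; ring) hc34 hs34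
    have e10 := exp_val (2 * Real.pi * (1 / 2 + ((1:ℕ) : ℝ)) * (1 / 2 + ((0:ℕ) : ℝ)) / ((2:ℕ) : ℝ))
      _ _ (3 * Real.pi / 4) 0 (by push_cast; ring) hc34 hs34
    have e11 := exp_val (2 * Real.pi * (1 / 2 + ((1:ℕ) : ℝ)) * (1 / 2 + ((1:ℕ) : ℝ)) / ((2:ℕ) : ℝ))
      _ _ (Real.pi / 4) 1 (by push_cast; ring) Real.cos_pi_div_four Real.sin_pi_div_four
    rw [e00, e01] at h10
    rw [e10, e11] at h11
    rw [e00, e01] at h20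
    rw [e10, e11] at h21
    push_cast at h10 h11 h20 h21
    have hr2 : Real.sqrt 2 ≠ 0 := by positivity
    rcases hℓ with rfl | rfl | ⟨-, rfl | rfl⟩
    · obtain ⟨hP0, hP1⟩ := alg2 (Real.sqrt 2) hr2 ((-Complex.I) ^ (0:ℕ)) 1
        (Zak (Real.sqrt 2 * lam) g ((1/2 + 0)/2) (1/2)) (Zak (Real.sqrt 2 * lam) g ((1/2 + 1)/2) (1/2))
        (Zak (Real.sqrt 2 / lam) g ((1/2 + 0)/2) (1/2)) (Zak (Real.sqrt 2 / lam) g ((1/2 + 1)/2) (1/2))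
        (Or.inl ⟨by norm_num, rfl⟩)
        (by linear_combination h10) (by linear_combination h11)
        (by linear_combination h20) (by linear_combination h21)
      interval_cases p
      · simpa using hP0
      · simpa using hP1
    · obtain ⟨hP0, hP1⟩ := alg2 (Real.sqrt 2) hr2 ((-Complex.I) ^ (2:ℕ)) (-1)
        (Zak (Real.sqrt 2 * lam) g ((1/2 + 0)/2) (1/2)) (Zak (Real.sqrt 2 * lam) g ((1/2 + 1)/2) (1/2))
        (Zak (Real.sqrt 2 / lam) g ((1/2 + 0)/2) (1/2)) (Zak (Real.sqrt 2 / lam) g ((1/2 + 1)/2) (1/2))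
        (Or.inr (Or.inl ⟨by rw [neg_pow, Complex.I_sq]; norm_num, rfl⟩))
        (by linear_combination h10) (by linear_combination h11)
        (by linear_combination h20) (by linear_combination h21)
      interval_cases p
      · simpa using hP0
      · simpa using hP1
    · obtain ⟨hP0, hP1⟩ := alg2 (Real.sqrt 2) hr2 ((-Complex.I) ^ (1:ℕ)) 1
        (Zak (Real.sqrt 2 * lam) g ((1/2 + 0)/2) (1/2)) (Zak (Real.sqrt 2 * lam) g ((1/2 + 1)/2) (1/2))
        (Zak (Real.sqrt 2 / lam) g ((1/2 + 0)/2) (1/2)) (Zak (Real.sqrt 2 / lam) g ((1/2 + 1)/2) (1/2))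
        (Or.inr (Or.inr (Or.inl ⟨pow_one _, rfl⟩)))
        (by linear_combination h10) (by linear_combination h11)
        (by linear_combination h20) (by linear_combination h21)
      interval_cases p
      · simpa using hP0
      · simpa using hP1
    · obtain ⟨hP0, hP1⟩ := alg2 (Real.sqrt 2) hr2 ((-Complex.I) ^ (3:ℕ)) (-1)
        (Zak (Real.sqrt 2 * lam) g ((1/2 + 0)/2) (1/2)) (Zak (Real.sqrt 2 * lam) g ((1/2 + 1)/2) (1/2))
        (Zak (Real.sqrt 2 / lam) g ((1/2 + 0)/2) (1/2)) (Zak (Real.sqrt 2 / lam) g ((1/2 + 1)/2) (1/2))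
        (Or.inr (Or.inr (Or.inr ⟨by norm_num [pow_succ, pow_two, Complex.I_mul_I], rfl⟩)))
        (by linear_combination h10) (by linear_combination h11)
        (by linear_combination h20) (by linear_combination h21)
      interval_cases p
      · simpa using hP0
      · simpa using hP1
  · -- N = 3
    have hsq3 : (0 : ℝ) < Real.sqrt ((3:ℕ) : ℝ) := Real.sqrt_pos.mpr (by norm_num)
    have ha : 0 < Real.sqrt ((3:ℕ) : ℝ) * lam := by positivity
    have hb : 0 < Real.sqrt ((3:ℕ) : ℝ) / lam := by positivity
    have hab : (Real.sqrt ((3:ℕ) : ℝ) * lam) * (Real.sqrt ((3:ℕ) : ℝ) / lam) = ((3:ℕ) : ℝ) := by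
      field_simp
      linear_combination Real.mul_self_sqrt (show (0:ℝ) ≤ ((3:ℕ) : ℝ) by positivity)
    have hab' : (Real.sqrt ((3:ℕ) : ℝ) / lam) * (Real.sqrt ((3:ℕ) : ℝ) * lam) = ((3:ℕ) : ℝ) := by
      linarith [hab]
    have k1 := fun q => zak_key_s12 hgc hC hs hF (n := 3) (by norm_num) ha hb hab q
    have k2 := fun q => zak_key_s12 hgc hC hs hF (n := 3) (by norm_num) hb ha hab' q
    have h10 := k1 0
    have h11 := k1 1
    have h12 := k1 2
    have h20 := k2 0
    have h21 := k2 1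
    have h22 := k2 2
    simp only [Finset.sum_range_succ, Finset.sum_range_zero, zero_add] at h10 h11 h12 h20 h21 h22
    have hc56 : Real.cos (5 * Real.pi / 6) = -(Real.sqrt 3 / 2) := by
      rw [show (5 * Real.pi / 6) = Real.pi - Real.pi / 6 by ring, Real.cos_pi_sub,
        Real.cos_pi_div_six]
    have hs56 : Real.sin (5 * Real.pi / 6) = 1 / 2 := by
      rw [show (5 * Real.pi / 6) = Real.pi - Real.pi / 6 by ring, Real.sin_pi_sub,
        Real.sin_pi_div_six]
    have hcm : Real.cos (-(Real.pi / 2)) = 0 := by rw [Real.cos_neg, Real.cos_pi_div_two]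
    have hsm : Real.sin (-(Real.pi / 2)) = -1 := by rw [Real.sin_neg, Real.sin_pi_div_two]
    have e00 := exp_val (2 * Real.pi * (1 / 2 + ((0:ℕ) : ℝ)) * (1 / 2 + ((0:ℕ) : ℝ)) / ((3:ℕ) : ℝ))
      _ _ (Real.pi / 6) 0 (by push_cast; ring) Real.cos_pi_div_six Real.sin_pi_div_six
    have e01 := exp_val (2 * Real.pi * (1 / 2 + ((0:ℕ) : ℝ)) * (1 / 2 + ((1:ℕ) : ℝ)) / ((3:ℕ) : ℝ))
      _ _ (Real.pi / 2) 0 (by push_cast; ring) Real.cos_pi_div_two Real.sin_pi_div_two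
    have e02 := exp_val (2 * Real.pi * (1 / 2 + ((0:ℕ) : ℝ)) * (1 / 2 + ((2:ℕ) : ℝ)) / ((3:ℕ) : ℝ))
      _ _ (5 * Real.pi / 6) 0 (by push_cast; ring) hc56 hs56
    have e10 := exp_val (2 * Real.pi * (1 / 2 + ((1:ℕ) : ℝ)) * (1 / 2 + ((0:ℕ) : ℝ)) / ((3:ℕ) : ℝ))
      _ _ (Real.pi / 2) 0 (by push_cast; ring) Real.cos_pi_div_two Real.sin_pi_div_two
    have e11 := exp_val (2 * Real.pi * (1 / 2 + ((1:ℕ) : ℝ)) * (1 / 2 + ((1:ℕ) : ℝ)) / ((3:ℕ) : ℝ))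
      _ _ (-(Real.pi / 2)) 1 (by push_cast; ring) hcm hsm
    have e12 := exp_val (2 * Real.pi * (1 / 2 + ((1:ℕ) : ℝ)) * (1 / 2 + ((2:ℕ) : ℝ)) / ((3:ℕ) : ℝ))
      _ _ (Real.pi / 2) 1 (by push_cast; ring) Real.cos_pi_div_two Real.sin_pi_div_two
    have e20 := exp_val (2 * Real.pi * (1 / 2 + ((2:ℕ) : ℝ)) * (1 / 2 + ((0:ℕ) : ℝ)) / ((3:ℕ) : ℝ))
      _ _ (5 * Real.pi / 6) 0 (by push_cast; ring) hc56 hs56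
    have e21 := exp_val (2 * Real.pi * (1 / 2 + ((2:ℕ) : ℝ)) * (1 / 2 + ((1:ℕ) : ℝ)) / ((3:ℕ) : ℝ))
      _ _ (Real.pi / 2) 1 (by push_cast; ring) Real.cos_pi_div_two Real.sin_pi_div_two
    have e22 := exp_val (2 * Real.pi * (1 / 2 + ((2:ℕ) : ℝ)) * (1 / 2 + ((2:ℕ) : ℝ)) / ((3:ℕ) : ℝ))
      _ _ (Real.pi / 6) 2 (by push_cast; ring) Real.cos_pi_div_six Real.sin_pi_div_six
    rw [e00, e01, e02] at h10
    rw [e10, e11, e12] at h11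
    rw [e20, e21, e22] at h12
    rw [e00, e01, e02] at h20
    rw [e10, e11, e12] at h21
    rw [e20, e21, e22] at h22
    push_cast at h10 h11 h12 h20 h21 h22
    have hr3 : Real.sqrt 3 ≠ 0 := by positivity
    have hr32 : ((Real.sqrt 3 : ℝ) : ℂ) ^ 2 = 3 := by
      rw [← Complex.ofReal_pow, Real.sq_sqrt (by norm_num : (0:ℝ) ≤ 3)]
      norm_num
    rcases hℓ with rfl | rfl | ⟨h32, -⟩
    · obtain ⟨hP0, hP1, hP2⟩ := alg3 (Real.sqrt 3) hr3 hr32 ((-Complex.I) ^ (0:ℕ)) 1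
        (Zak (Real.sqrt 3 * lam) g ((1/2 + 0)/3) (1/2)) (Zak (Real.sqrt 3 * lam) g ((1/2 + 1)/3) (1/2))
        (Zak (Real.sqrt 3 * lam) g ((1/2 + 2)/3) (1/2))
        (Zak (Real.sqrt 3 / lam) g ((1/2 + 0)/3) (1/2)) (Zak (Real.sqrt 3 / lam) g ((1/2 + 1)/3) (1/2))
        (Zak (Real.sqrt 3 / lam) g ((1/2 + 2)/3) (1/2))
        (Or.inl ⟨by norm_num, rfl⟩)
        (by linear_combination h10) (by linear_combination h11) (by linear_combination h12)
        (by linear_combination h20) (by linear_combination h21) (by linear_combination h22)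
      interval_cases p
      · simpa using hP0
      · simpa using hP1
      · simpa using hP2
    · obtain ⟨hP0, hP1, hP2⟩ := alg3 (Real.sqrt 3) hr3 hr32 ((-Complex.I) ^ (2:ℕ)) (-1)
        (Zak (Real.sqrt 3 * lam) g ((1/2 + 0)/3) (1/2)) (Zak (Real.sqrt 3 * lam) g ((1/2 + 1)/3) (1/2))
        (Zak (Real.sqrt 3 * lam) g ((1/2 + 2)/3) (1/2))
        (Zak (Real.sqrt 3 / lam) g ((1/2 + 0)/3) (1/2)) (Zak (Real.sqrt 3 / lam) g ((1/2 + 1)/3) (1/2))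
        (Zak (Real.sqrt 3 / lam) g ((1/2 + 2)/3) (1/2))
        (Or.inr ⟨by rw [neg_pow, Complex.I_sq]; norm_num, rfl⟩)
        (by linear_combination h10) (by linear_combination h11) (by linear_combination h12)
        (by linear_combination h20) (by linear_combination h21) (by linear_combination h22)
      interval_cases p
      · simpa using hP0
      · simpa using hP1
      · simpa using hP2
    · exact absurd h32 (by norm_num)
end
end
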